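/- arXiv:1911.09611 — 6 statements merged into one kernel-verified Lean document; each statement's English description precedes it below -/
import Mathlib

section
/- Let Γ be an infinite cardinal with uncountable cofinality, let n ∈ ℕ, and let M be a symmetric continuous n-linear form on c₀(Γ) that is weakly sequentially continuous. Then there exists a countable set A ⊆ Γ such that M(e_{γ₁}, …, e_{γₙ}) = 0 whenever {γ₁, …, γₙ} is not contained in A. -/
/-!
For every functional `φ` on `c₀(Γ)` and finite `s ⊆ Γ` we have `∑_{δ ∈ s} φ(e_δ) ≤ ‖φ‖`, so the
unit vectors tend weakly to `0` along the cofinite filter. Suppose infinitely many tuples `v`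
had `|M(e_v)| ≥ ε`. Then we can pick a sequence of distinct such tuples in which every
coordinate is either constant or injective, and at least one coordinate is injective. By weak
sequential continuity `M(e_{v_k})` tends to `M` of a tuple with a zero entry, which is `0`.
Hence `v ↦ M(e_v)` tends to `0` along the cofinite filter and has countable support. Take `A`
to be the union of the ranges of the tuples in that support.
-/

open scoped ZeroAtInfty

/-- The canonical unit vector `e γ` in `c₀(Γ)` (for `Γ` discrete). -/
noncomputable def unitVec {Γ : Type*} [TopologicalSpace Γ] [DiscreteTopology Γ] (γ : Γ) :
    C₀(Γ, ℝ) where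
  toFun := Set.indicator ({γ} : Set Γ) (fun _ => (1 : ℝ))
  continuous_toFun := continuous_of_discreteTopology
  zero_at_infty' := by
    rw [Filter.cocompact_eq_cofinite]
    have h : {x : Γ | Set.indicator ({γ} : Set Γ) (fun _ => (1 : ℝ)) x ≠ 0}.Finite :=
      (Set.finite_singleton γ).subset fun x hx => by
        by_contra hxγ
        exact hx (Set.indicator_of_notMem hxγ _)
    have h' : ∀ᶠ x in Filter.cofinite,
        Set.indicator ({γ} : Set Γ) (fun _ => (1 : ℝ)) x = 0 :=
      Filter.eventually_cofinite.2 h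
    exact Filter.Tendsto.congr' (h'.mono fun x hx => hx.symm) tendsto_const_nhds

open Filter Function Topology

section Subsequences

variable {α : Type*}

def ConstOrInjective (g : ℕ → α) : Prop :=
  (∃ c, ∀ k, g k = c) ∨ Injective g

theorem ConstOrInjective.comp {g : ℕ → α} (hg : ConstOrInjective g) {ψ : ℕ → ℕ}
    (hψ : Injective ψ) : ConstOrInjective (g ∘ ψ) := by
  rcases hg with ⟨c, hc⟩ | hg
  · exact Or.inl ⟨c, fun k => hc (ψ k)⟩
  · exact Or.inr (hg.comp hψ)

theorem exists_injective_constOrInjective_comp (f : ℕ → α) :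
    ∃ ψ : ℕ → ℕ, Injective ψ ∧ ConstOrInjective (f ∘ ψ) := by
  rcases (Set.range f).finite_or_infinite with hfin | hinf
  · have := hfin.to_subtype
    obtain ⟨c, hc⟩ := Finite.exists_infinite_fiber (Set.rangeFactorization f)
    let e := Infinite.natEmbedding (Set.rangeFactorization f ⁻¹' {c})
    refine ⟨fun k => e k, Subtype.val_injective.comp e.injective, Or.inl ⟨c, fun k => ?_⟩⟩
    exact congrArg Subtype.val (e k).2
  · let e := hinf.natEmbedding
    choose ψ hψ using fun k => (e k).2
    have hinj : Injective (f ∘ ψ) := fun a b hab =>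
      e.injective (Subtype.ext (by simpa only [comp_apply, hψ] using hab))
    exact ⟨ψ, hinj.of_comp, Or.inr hinj⟩

theorem exists_injective_forall_constOrInjective_comp {ι : Type*} [Finite ι]
    (t : ℕ → ι → α) :
    ∃ ψ : ℕ → ℕ, Injective ψ ∧ ∀ i, ConstOrInjective fun k => t (ψ k) i := by
  classical
  have := Fintype.ofFinite ι
  suffices h : ∀ s : Finset ι, ∃ ψ : ℕ → ℕ, Injective ψ ∧
      ∀ i ∈ s, ConstOrInjective fun k => t (ψ k) i by
    obtain ⟨ψ, hψ, ht⟩ := h Finset.univ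
    exact ⟨ψ, hψ, fun i => ht i (Finset.mem_univ i)⟩
  intro s
  induction s using Finset.induction_on with
  | empty => exact ⟨id, injective_id, by simp⟩
  | insert j s _ ih =>
    obtain ⟨ψ, hψ, hs⟩ := ih
    obtain ⟨χ, hχ, hj⟩ := exists_injective_constOrInjective_comp fun k => t (ψ k) j
    refine ⟨ψ ∘ χ, hψ.comp hχ, fun i hi => ?_⟩
    rcases Finset.mem_insert.mp hi with rfl | hi
    · exact hj
    · exact (hs i hi).comp hχ

end Subsequences

section WeaklySequentiallyContinuous

variable {X F ι Γ : Type*} [NormedAddCommGroup X] [NormedSpace ℝ X]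
  [NormedAddCommGroup F] [NormedSpace ℝ F]

def WeaklySeqContinuous (M : (ι → X) → F) : Prop :=
  ∀ (x : ℕ → ι → X) (y : ι → X),
    (∀ (i : ι) (φ : X →L[ℝ] ℝ), Tendsto (fun k => φ (x k i)) atTop (𝓝 (φ (y i)))) →
    Tendsto (fun k => M (x k)) atTop (𝓝 (M y))

variable {M : ContinuousMultilinearMap ℝ (fun _ : ι => X) F} {u : Γ → X}

theorem WeaklySeqContinuous.tendsto_zero_of_constOrInjective (hM : WeaklySeqContinuous ⇑M)
    (hu : ∀ φ : X →L[ℝ] ℝ, Tendsto (fun γ => φ (u γ)) cofinite (𝓝 0))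
    {t : ℕ → ι → Γ} (ht : ∀ i, ConstOrInjective fun k => t k i)
    {i₀ : ι} (hi₀ : Injective fun k => t k i₀) :
    Tendsto (fun k => M fun i => u (t k i)) atTop (𝓝 0) := by
  classical
  set y : ι → X := fun i => if Injective (fun k => t k i) then 0 else u (t 0 i)
  have hy : M y = 0 := M.map_coord_zero i₀ (if_pos hi₀)
  rw [← hy]
  refine hM _ y fun i φ => ?_
  by_cases hi : Injective fun k => t k i
  · simp only [y, if_pos hi, map_zero]
    rw [← Nat.cofinite_eq_atTop]
    exact (hu φ).comp hi.tendsto_cofinite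
  · obtain ⟨c, hc⟩ := (ht i).resolve_right hi
    simp only [y, if_neg hi, hc]
    exact tendsto_const_nhds

theorem WeaklySeqContinuous.tendsto_cofinite_zero [Finite ι] (hM : WeaklySeqContinuous ⇑M)
    (hu : ∀ φ : X →L[ℝ] ℝ, Tendsto (fun γ => φ (u γ)) cofinite (𝓝 0)) :
    Tendsto (fun v : ι → Γ => M fun i => u (v i)) cofinite (𝓝 0) := by
  rw [Metric.tendsto_nhds]
  intro ε hε
  rw [eventually_cofinite]
  by_contra hinf
  let w := Set.Infinite.natEmbedding _ hinf
  obtain ⟨ψ, hψ, ht⟩ := exists_injective_forall_constOrInjective_comp fun k => (w k : ι → Γ)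
  have hw : Injective fun k => (w (ψ k) : ι → Γ) :=
    Subtype.val_injective.comp (w.injective.comp hψ)
  obtain ⟨i₀, hi₀⟩ : ∃ i, Injective fun k => (w (ψ k) : ι → Γ) i := by
    by_contra! hconst
    choose c hc using fun i => (ht i).resolve_right (hconst i)
    exact zero_ne_one (hw (funext fun i => (hc i 0).trans (hc i 1).symm))
  obtain ⟨k, hk⟩ := ((hM.tendsto_zero_of_constOrInjective hu ht hi₀).eventually
    (Metric.ball_mem_nhds 0 hε)).exists
  exact (w (ψ k)).2 hk

end WeaklySequentiallyContinuous

section UnitVec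

variable {Γ : Type*} [TopologicalSpace Γ] [DiscreteTopology Γ]

theorem unitVec_apply [DecidableEq Γ] (γ x : Γ) : unitVec γ x = if x = γ then 1 else 0 := by
  simp [unitVec, Pi.single_apply]

theorem norm_sum_unitVec_le_one (s : Finset Γ) : ‖∑ δ ∈ s, unitVec δ‖ ≤ 1 := by
  classical
  rw [← ZeroAtInftyContinuousMap.norm_toBCF_eq_norm,
    BoundedContinuousFunction.norm_le zero_le_one]
  intro x
  change |(∑ δ ∈ s, unitVec δ) x| ≤ 1
  have hsum : (∑ δ ∈ s, unitVec δ) x = ∑ δ ∈ s, unitVec δ x :=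
    map_sum (AddMonoidHom.mk' (fun f : C₀(Γ, ℝ) => f x) fun _ _ => rfl) _ _
  simp only [hsum, unitVec_apply, Finset.sum_ite_eq]
  split_ifs <;> simp

theorem sum_apply_unitVec_le_norm (φ : C₀(Γ, ℝ) →L[ℝ] ℝ) (s : Finset Γ) :
    ∑ δ ∈ s, φ (unitVec δ) ≤ ‖φ‖ :=
  calc ∑ δ ∈ s, φ (unitVec δ) = φ (∑ δ ∈ s, unitVec δ) := (map_sum φ _ _).symm
    _ ≤ ‖φ‖ * ‖∑ δ ∈ s, unitVec δ‖ := (Real.le_norm_self _).trans (φ.le_opNorm _)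
    _ ≤ ‖φ‖ := mul_le_of_le_one_right (norm_nonneg φ) (norm_sum_unitVec_le_one s)

theorem finite_setOf_le_apply_unitVec (φ : C₀(Γ, ℝ) →L[ℝ] ℝ) {ε : ℝ} (hε : 0 < ε) :
    {δ : Γ | ε ≤ φ (unitVec δ)}.Finite := by
  by_contra hinf
  obtain ⟨N, hN⟩ := exists_nat_gt (‖φ‖ / ε)
  obtain ⟨s, hs, rfl⟩ := Set.Infinite.exists_subset_card_eq hinf N
  have : (s.card : ℝ) * ε ≤ ‖φ‖ :=
    calc (s.card : ℝ) * ε = ∑ _δ ∈ s, ε := by simp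
      _ ≤ ∑ δ ∈ s, φ (unitVec δ) := Finset.sum_le_sum fun δ hδ => hs hδ
      _ ≤ ‖φ‖ := sum_apply_unitVec_le_norm φ s
  exact ((div_lt_iff₀ hε).mp hN).not_ge this

theorem tendsto_apply_unitVec_cofinite (φ : C₀(Γ, ℝ) →L[ℝ] ℝ) :
    Tendsto (fun δ => φ (unitVec δ)) cofinite (𝓝 0) := by
  rw [NormedAddGroup.tendsto_nhds_zero]
  intro ε hε
  rw [eventually_cofinite]
  refine ((finite_setOf_le_apply_unitVec φ hε).union
    (finite_setOf_le_apply_unitVec (-φ) hε)).subset fun δ hδ => ?_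
  simpa [Real.norm_eq_abs, le_abs] using hδ

end UnitVec

theorem wsc_symmetric_multilinear_form_on_c0_countably_supported_general
    (Γ : Type*) [TopologicalSpace Γ] [DiscreteTopology Γ]
    (n : ℕ)
    (M : ContinuousMultilinearMap ℝ (fun _ : Fin n => C₀(Γ, ℝ)) ℝ)
    (hwsc : ∀ (x : ℕ → Fin n → C₀(Γ, ℝ)) (y : Fin n → C₀(Γ, ℝ)),
      (∀ (i : Fin n) (φ : C₀(Γ, ℝ) →L[ℝ] ℝ),
        Filter.Tendsto (fun k => φ (x k i)) Filter.atTop (nhds (φ (y i)))) →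
      Filter.Tendsto (fun k => M (x k)) Filter.atTop (nhds (M y))) :
    ∃ A : Set Γ, A.Countable ∧
      ∀ γ : Fin n → Γ, ¬ (Set.range γ ⊆ A) → M (fun i => unitVec (γ i)) = 0 := by
  set g : (Fin n → Γ) → ℝ := fun γ => M fun i => unitVec (γ i)
  have hg : Tendsto g cofinite (𝓝 0) :=
    WeaklySeqContinuous.tendsto_cofinite_zero hwsc tendsto_apply_unitVec_cofinite
  have hsupp : (Function.support g).Countable := by
    rw [Function.support_eq_preimage, Set.preimage_compl]
    simpa only [ker_nhds] using hg.countable_compl_preimage_ker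
  refine ⟨⋃ γ ∈ Function.support g, Set.range γ,
    hsupp.biUnion fun γ _ => (Set.finite_range γ).countable, fun γ hγ => ?_⟩
  by_contra hγ0
  exact hγ (Set.subset_biUnion_of_mem (u := Set.range) hγ0)

/-- Let `Γ` be an infinite cardinal of uncountable cofinality and `M` a
weakly sequentially continuous symmetric continuous `n`-linear form on `c₀(Γ)`. Then `M` is
countably supported: there is a countable `A ⊆ Γ` with `M (e γ₁, …, e γₙ) = 0` whenever
`{γ₁, …, γₙ} ⊄ A`. -/
theorem wsc_symmetric_multilinear_form_on_c0_countably_supported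
    (Γ : Type*) [TopologicalSpace Γ] [DiscreteTopology Γ] [Infinite Γ]
    (hcof : Cardinal.aleph0 < (Cardinal.mk Γ).ord.cof)
    (n : ℕ)
    (M : ContinuousMultilinearMap ℝ (fun _ : Fin n => C₀(Γ, ℝ)) ℝ)
    (hsymm : ∀ (σ : Equiv.Perm (Fin n)) (v : Fin n → C₀(Γ, ℝ)), M (v ∘ σ) = M v)
    (hwsc : ∀ (x : ℕ → Fin n → C₀(Γ, ℝ)) (y : Fin n → C₀(Γ, ℝ)),
      (∀ (i : Fin n) (φ : C₀(Γ, ℝ) →L[ℝ] ℝ),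
        Filter.Tendsto (fun k => φ (x k i)) Filter.atTop (nhds (φ (y i)))) →
      Filter.Tendsto (fun k => M (x k)) Filter.atTop (nhds (M y))) :
    ∃ A : Set Γ, A.Countable ∧
      ∀ γ : Fin n → Γ, ¬ (Set.range γ ⊆ A) → M (fun i => unitVec (γ i)) = 0 :=
  wsc_symmetric_multilinear_form_on_c0_countably_supported_general Γ n M hwsc
end

section
/- Let (E,‖·‖) be a nonzero real normed space that admits an equivalent norm which is analytic on E ∖ {0}. Then there exists a function f : E → ℝ that is real-analytic on all of E, satisfies f(0) = 0, and satisfies inf { f(x) : x ∈ E, ‖x‖ = 1 } > 1. -/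
/-!
Fix a unit vector `u`, a functional `g` with `g u = 1`, a small `ε > 0` and `e = ε • u`. By the
triangle inequality the midpoint defect `D z = (N (e + z) + N (e - z)) / 2 - N e` is nonnegative
and at least `N z - N e`. It is analytic wherever `e ± z ≠ 0`, which is guaranteed if the
`g`-coordinate of `z` is smaller than `ε`. So compose `D` with the analytic map `φ` that replaces
the `g`-coordinate `t` of `x` by `ε / 2 * sin t`, and add `(g x) ^ 2`. On the unit sphere
either `|g x| ≥ 1 / 2`, and the square term is at least `1 / 4`, or `‖φ x‖ ≥ (1 - ε) / 2`, and
the defect is bounded below by the coercivity of `N`. A rescaling pushes the bound above `1`.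
-/

/-- `N` is a norm on the real vector space `Y`. -/
def IsNorm {Y : Type*} [AddCommGroup Y] [Module ℝ Y] (N : Y → ℝ) : Prop :=
  (∀ x y, N (x + y) ≤ N x + N y) ∧ (∀ (a : ℝ) (x : Y), N (a • x) = |a| * N x) ∧
    ∀ x, N x = 0 → x = 0

/-- `N` is equivalent to the ambient norm of `Y`. -/
def IsEquivToAmbientNorm {Y : Type*} [NormedAddCommGroup Y] (N : Y → ℝ) : Prop :=
  ∃ a b : ℝ, 0 < a ∧ a ≤ b ∧ ∀ x : Y, a * ‖x‖ ≤ N x ∧ N x ≤ b * ‖x‖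

noncomputable def midpointDefect {Y : Type*} [AddCommGroup Y] (N : Y → ℝ) (e z : Y) : ℝ :=
  (N (e + z) + N (e - z)) / 2 - N e

theorem midpointDefect_zero_right {Y : Type*} [AddCommGroup Y] (N : Y → ℝ) (e : Y) :
    midpointDefect N e 0 = 0 := by
  simp [midpointDefect]

namespace IsNorm

variable {Y : Type*} [AddCommGroup Y] [Module ℝ Y] {N : Y → ℝ}

theorem map_neg (hN : IsNorm N) (z : Y) : N (-z) = N z := by
  simpa using hN.2.1 (-1) z

theorem map_two_smul (hN : IsNorm N) (z : Y) : N ((2 : ℝ) • z) = 2 * N z := by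
  simpa using hN.2.1 2 z

theorem midpointDefect_nonneg (hN : IsNorm N) (e z : Y) : 0 ≤ midpointDefect N e z := by
  have h := hN.1 (e + z) (e - z)
  rw [show e + z + (e - z) = (2 : ℝ) • e by module, hN.map_two_smul] at h
  unfold midpointDefect
  linarith

theorem sub_le_midpointDefect (hN : IsNorm N) (e z : Y) : N z - N e ≤ midpointDefect N e z := by
  have h := hN.1 (e + z) (z - e)
  rw [show e + z + (z - e) = (2 : ℝ) • z by module, hN.map_two_smul, ← hN.map_neg (z - e),
    neg_sub] at h
  unfold midpointDefect
  linarith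

end IsNorm

section ReplaceCoord

variable {E : Type*} [NormedAddCommGroup E] [NormedSpace ℝ E]

def replaceCoord (g : E →L[ℝ] ℝ) (u : E) (h : ℝ → ℝ) (x : E) : E :=
  x + (h (g x) - g x) • u

variable {g : E →L[ℝ] ℝ} {u : E} {h : ℝ → ℝ}

theorem apply_replaceCoord (hgu : g u = 1) (x : E) : g (replaceCoord g u h x) = h (g x) := by
  simp [replaceCoord, hgu]

theorem replaceCoord_zero (h0 : h 0 = 0) : replaceCoord g u h 0 = 0 := by
  simp [replaceCoord, h0]

theorem analyticAt_replaceCoord {x : E} (hh : AnalyticAt ℝ h (g x)) :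
    AnalyticAt ℝ (replaceCoord g u h) x :=
  analyticAt_id.add (((hh.comp (g.analyticAt x)).sub (g.analyticAt x)).smul analyticAt_const)

theorem norm_sub_le_norm_replaceCoord (x : E) :
    ‖x‖ - (|g x| + |h (g x)|) * ‖u‖ ≤ ‖replaceCoord g u h x‖ := by
  have hx : x = replaceCoord g u h x + g x • u - h (g x) • u := by
    simp only [replaceCoord]; module
  have := calc
    ‖x‖ = ‖replaceCoord g u h x + g x • u - h (g x) • u‖ := congrArg _ hx
    _ ≤ ‖replaceCoord g u h x‖ + ‖g x • u‖ + ‖h (g x) • u‖ :=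
      norm_sub_le_of_le (norm_add_le _ _) le_rfl
  simp only [norm_smul, Real.norm_eq_abs] at this
  linarith

end ReplaceCoord

section SeparatingFunction

variable {E : Type*} [NormedAddCommGroup E] [NormedSpace ℝ E]
  {N : E → ℝ} {g : E →L[ℝ] ℝ} {u : E} {ε : ℝ}

theorem smul_add_ne_zero_of_abs_apply_lt (hgu : g u = 1) {z : E} (hz : |g z| < ε) :
    ε • u + z ≠ 0 := fun h0 ↦ by
  have := congrArg g h0
  rw [map_add, map_smul, hgu, smul_eq_mul, mul_one, map_zero] at this
  linarith [abs_lt.mp hz]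

noncomputable def separatingFunction (N : E → ℝ) (g : E →L[ℝ] ℝ) (u : E) (ε : ℝ) (x : E) :
    ℝ :=
  midpointDefect N (ε • u) (replaceCoord g u (fun t ↦ ε / 2 * Real.sin t) x) + g x ^ 2

theorem separatingFunction_zero : separatingFunction N g u ε 0 = 0 := by
  simp [separatingFunction, replaceCoord_zero, midpointDefect_zero_right]

theorem analyticOnNhd_separatingFunction (hNan : AnalyticOnNhd ℝ N {x | x ≠ 0}) (hgu : g u = 1)
    (hε : 0 < ε) : AnalyticOnNhd ℝ (separatingFunction N g u ε) Set.univ := by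
  intro x _
  set φ := replaceCoord g u (fun t ↦ ε / 2 * Real.sin t)
  have hφ : AnalyticAt ℝ φ x :=
    analyticAt_replaceCoord (analyticAt_const.mul Real.analyticAt_sin)
  have hgφ : |g (φ x)| < ε := by
    rw [apply_replaceCoord hgu, abs_mul, abs_of_pos (half_pos hε)]
    nlinarith [Real.abs_sin_le_one (g x)]
  have hplus : ε • u + φ x ≠ 0 := smul_add_ne_zero_of_abs_apply_lt hgu hgφ
  have hminus : ε • u - φ x ≠ 0 := by
    rw [sub_eq_add_neg]
    exact smul_add_ne_zero_of_abs_apply_lt hgu (by rwa [map_neg, abs_neg])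
  have hplus_an : AnalyticAt ℝ (fun y ↦ N (ε • u + φ y)) x :=
    (hNan _ hplus).comp (f := fun y ↦ ε • u + φ y) (analyticAt_const.add hφ)
  have hminus_an : AnalyticAt ℝ (fun y ↦ N (ε • u - φ y)) x :=
    (hNan _ hminus).comp (f := fun y ↦ ε • u - φ y) (analyticAt_const.sub hφ)
  exact (((hplus_an.add hminus_an).div_const).sub analyticAt_const).add
    ((g.analyticAt x).pow 2)

theorem le_separatingFunction {a : ℝ} (hN : IsNorm N) (ha : 0 ≤ a)
    (hlow : ∀ x, a * ‖x‖ ≤ N x) (hu : ‖u‖ = 1) (hε : 0 ≤ ε) {x : E} (hx : ‖x‖ = 1) :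
    min (1 / 4) (a / 2 - ε * (a / 2 + N u)) ≤ separatingFunction N g u ε x := by
  set φ := replaceCoord g u (fun t ↦ ε / 2 * Real.sin t)
  have hD := hN.midpointDefect_nonneg (ε • u) (φ x)
  rcases le_or_gt (1 / 2) |g x| with hg | hg
  · have : 1 / 4 ≤ g x ^ 2 := by nlinarith [sq_abs (g x)]
    exact min_le_of_left_le (by unfold separatingFunction; linarith)
  · have hφ : 1 / 2 - ε / 2 ≤ ‖φ x‖ := by
      have : ‖x‖ - (|g x| + |ε / 2 * Real.sin (g x)|) * ‖u‖ ≤ ‖φ x‖ :=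
        norm_sub_le_norm_replaceCoord (h := fun t ↦ ε / 2 * Real.sin t) x
      rw [hx, hu, abs_mul, abs_of_nonneg (by positivity : 0 ≤ ε / 2)] at this
      nlinarith [Real.abs_sin_le_one (g x)]
    have hNe : N (ε • u) = ε * N u := by rw [hN.2.1, abs_of_nonneg hε]
    have := hN.sub_le_midpointDefect (ε • u) (φ x)
    have := hlow (φ x)
    refine min_le_of_right_le ?_
    unfold separatingFunction
    nlinarith [sq_nonneg (g x)]

theorem exists_analyticOnNhd_pos_on_unit_sphere [Nontrivial E] {a : ℝ} (hN : IsNorm N)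
    (ha : 0 < a) (hlow : ∀ x, a * ‖x‖ ≤ N x) (hNan : AnalyticOnNhd ℝ N {x | x ≠ 0}) :
    ∃ f : E → ℝ, AnalyticOnNhd ℝ f Set.univ ∧ f 0 = 0 ∧
      ∃ δ > 0, ∀ x : E, ‖x‖ = 1 → δ ≤ f x := by
  obtain ⟨u, hu⟩ := exists_norm_eq E zero_le_one
  obtain ⟨g, -, hgu⟩ := exists_dual_vector ℝ u (by rw [hu]; exact one_ne_zero)
  rw [hu, RCLike.ofReal_one] at hgu
  have hNu : 0 ≤ N u := by simpa [hu] using (mul_nonneg ha.le (norm_nonneg u)).trans (hlow u)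
  set ε := a / (2 * (a + 2 * N u))
  have hε : 0 < ε := by positivity
  have hbound : a / 2 - ε * (a / 2 + N u) = a / 4 := by simp only [ε]; field_simp; ring
  refine ⟨separatingFunction N g u ε, analyticOnNhd_separatingFunction hNan hgu hε,
    separatingFunction_zero, min (1 / 4) (a / 4), by positivity, fun x hx ↦ ?_⟩
  rw [← hbound]
  exact le_separatingFunction hN ha.le hlow hu hε.le hx

end SeparatingFunction

/-- If a nonzero real normed space `E` admits an equivalent norm analytic
off the origin, then there is a real-analytic function `f : E → ℝ` with `f 0 = 0` and
`inf f(S_E) > 1`. -/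
theorem analytic_norm_gives_separating_analytic_function
    (E : Type*) [NormedAddCommGroup E] [NormedSpace ℝ E] [Nontrivial E]
    (hN : ∃ N : E → ℝ, IsNorm N ∧ IsEquivToAmbientNorm N ∧
      AnalyticOnNhd ℝ N {x : E | x ≠ 0}) :
    ∃ f : E → ℝ, AnalyticOnNhd ℝ f Set.univ ∧ f 0 = 0 ∧
      ∃ c : ℝ, 1 < c ∧ ∀ x : E, ‖x‖ = 1 → c ≤ f x := by
  obtain ⟨N, hN, ⟨a, _, ha, -, hbd⟩, hNan⟩ := hN
  obtain ⟨f, hf, hf0, δ, hδ, hfδ⟩ :=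
    exists_analyticOnNhd_pos_on_unit_sphere hN ha (fun x ↦ (hbd x).1) hNan
  refine ⟨fun x ↦ 2 / δ * f x, fun x _ ↦ analyticAt_const.mul (hf x trivial), by simp [hf0],
    2, one_lt_two, fun x hx ↦ ?_⟩
  calc (2 : ℝ) = 2 / δ * δ := by field_simp
    _ ≤ 2 / δ * f x := by gcongr; exact hfδ x hx
end

section
/- Let S be an uncountable set. Then ℓ∞^{c,F}(S) admits no Gâteaux differentiable renorming: for every norm N on ℓ∞^{c,F}(S) equivalent to the supremum norm, there exists a nonzero point x at which N is not Gâteaux differentiable. -/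
open scoped ENNReal

/-- The space `ℓ∞^c(ι)` of bounded functions with countable support. -/
noncomputable def linftyC (ι : Type*) : Submodule ℝ (lp (fun _ : ι => ℝ) ∞) where
  carrier := {x | (Function.support (⇑x : ι → ℝ)).Countable}
  zero_mem' := by
    simp only [Set.mem_setOf_eq, lp.coeFn_zero]
    simp
  add_mem' := by
    intro x y hx hy
    refine ((hx.union hy).mono ?_ : _)
    rw [lp.coeFn_add]
    exact Function.support_add _ _
  smul_mem' := by
    intro c x hx
    refine hx.mono ?_
    rw [lp.coeFn_smul]
    intro i hi
    exact fun h => hi (by simp [h])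

/-- The space `ℓ∞^{c,F}(ι)` of finitely-valued bounded functions with countable support. -/
noncomputable def linftyCF (ι : Type*) : Submodule ℝ (lp (fun _ : ι => ℝ) ∞) where
  carrier := {x | (Function.support (⇑x : ι → ℝ)).Countable ∧ (Set.range (⇑x : ι → ℝ)).Finite}
  zero_mem' := by
    constructor
    · simp only [Set.mem_setOf_eq, lp.coeFn_zero]
      simp
    · simp only [Set.mem_setOf_eq, lp.coeFn_zero]
      exact (Set.finite_singleton 0).subset Set.range_const_subset
  add_mem' := by
    rintro x y ⟨hx1, hx2⟩ ⟨hy1, hy2⟩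
    constructor
    · refine ((hx1.union hy1).mono ?_ : _)
      rw [lp.coeFn_add]
      exact Function.support_add _ _
    · have h : Set.range (⇑(x + y) : _ → ℝ) ⊆
          Set.image2 (· + ·) (Set.range (⇑x : _ → ℝ)) (Set.range (⇑y : _ → ℝ)) := by
        rw [lp.coeFn_add]
        rintro _ ⟨n, rfl⟩
        exact ⟨x n, ⟨n, rfl⟩, y n, ⟨n, rfl⟩, rfl⟩
      exact (Set.Finite.image2 _ hx2 hy2).subset h
  smul_mem' := by
    rintro c x ⟨hx1, hx2⟩
    constructor
    · refine hx1.mono ?_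
      rw [lp.coeFn_smul]
      intro i hi
      exact fun h => hi (by simp [h])
    · have h : Set.range (⇑(c • x) : _ → ℝ) ⊆ (fun t => c • t) '' Set.range (⇑x : _ → ℝ) := by
        rw [lp.coeFn_smul]
        rintro _ ⟨n, rfl⟩
        exact ⟨x n, ⟨n, rfl⟩, rfl⟩
      exact (hx2.image _).subset h

/-- `N` is Gâteaux differentiable at `x`: there is a continuous linear functional `f`
with `(N (x + t • h) - N x) / t → f h` as `t → 0`, for every direction `h`. -/
def GateauxDifferentiableAt {Y : Type*} [NormedAddCommGroup Y] [NormedSpace ℝ Y]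
    (N : Y → ℝ) (x : Y) : Prop :=
  ∃ f : Y →L[ℝ] ℝ, ∀ h : Y,
    Filter.Tendsto (fun t : ℝ => (N (x + t • h) - N x) / t)
      (nhdsWithin 0 {t : ℝ | t ≠ 0}) (nhds (f h))


/-!
Call the elements of `ℓ∞^{c,F}(S)` with values in `{-1, 0, 1}` patterns. Given a countable set
`F`, extend a pattern greedily, each step almost maximizing the norm among the patterns that agree
with the current one on `F` and on its support; the limit is a peak: a pattern `x` maximizing the
norm among the patterns agreeing with it on the countable set `D = F ∪ supp x`. By convexity,
`N (x ± w) = N x` and `N w ≤ N x` for every pattern `w` vanishing on `D`. Since countable sets are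
closed under countable unions, the supremum of `N` over the peaks vanishing on `F` is constant for
all large enough countable `F`, which produces a nonzero peak `x` and a pattern `y` vanishing on its
`D` with `N y = N x`. On the span of `x` and `y` the norm is then `N x` times the sup norm of the
coordinates, which is not Gâteaux differentiable at the corner `x + y`.
-/

open Set Filter Topology Function

lemma not_gateauxDifferentiableAt_of_kink {E : Type*} [NormedAddCommGroup E] [NormedSpace ℝ E]
    {N : E → ℝ} {x u : E} {c : ℝ} (hc : 0 < c)
    (hleft : ∀ᶠ t in 𝓝[<] (0 : ℝ), N x ≤ N (x + t • u))
    (hright : ∀ᶠ t in 𝓝[>] (0 : ℝ), N x + c * t ≤ N (x + t • u)) :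
    ¬ GateauxDifferentiableAt N x := by
  rintro ⟨f, hf⟩
  have hlim (s : Set ℝ) (hs : s ⊆ {t | t ≠ 0}) :
      Tendsto (fun t : ℝ => (N (x + t • u) - N x) / t) (𝓝[s] 0) (𝓝 (f u)) :=
    (hf u).mono_left (nhdsWithin_mono 0 hs)
  have hf_nonpos : f u ≤ 0 :=
    le_of_tendsto (hlim (Iio 0) fun _ ht => ne_of_lt ht) <| by
      filter_upwards [hleft, self_mem_nhdsWithin] with t ht htneg
      exact div_nonpos_of_nonneg_of_nonpos (sub_nonneg.2 ht) (le_of_lt htneg)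
  have hf_ge : c ≤ f u :=
    ge_of_tendsto (hlim (Ioi 0) fun _ ht => ne_of_gt ht) <| by
      filter_upwards [hright, self_mem_nhdsWithin] with t ht htpos
      rw [le_div_iff₀ htpos]
      linarith
  linarith

namespace Seminorm

section Module

variable {E : Type*} [AddCommGroup E] [Module ℝ E] (p : Seminorm ℝ E)

lemma two_mul_le_add_add_sub (x y : E) : 2 * p x ≤ p (x + y) + p (x - y) := by
  calc 2 * p x = p ((2 : ℝ) • x) := by rw [map_smul_eq_mul, Real.norm_two]
    _ = p ((x + y) + (x - y)) := by rw [two_smul]; abel_nf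
    _ ≤ p (x + y) + p (x - y) := map_add_le_add p _ _

lemma eq_of_add_le_of_sub_le {x y : E} (hadd : p (x + y) ≤ p x) (hsub : p (x - y) ≤ p x) :
    p (x + y) = p x := by
  linarith [p.two_mul_le_add_add_sub x y]

lemma apply_smul_of_nonneg {c : ℝ} (hc : 0 ≤ c) (x : E) : p (c • x) = c * p x := by
  rw [map_smul_eq_mul, Real.norm_of_nonneg hc]

end Module

variable {E : Type*} [NormedAddCommGroup E] [NormedSpace ℝ E] (p : Seminorm ℝ E)

/-- On the span of `u` and `v` the seminorm is `p u` times the sup norm of the coordinates, whose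
unit ball has a corner at `u + v`. -/
theorem not_gateauxDifferentiableAt_add {u v : E} (hu : 0 < p u) (hv : p v = p u)
    (hadd : p (u + v) = p u) (hsub : p (u - v) = p u) :
    ¬ GateauxDifferentiableAt p (u + v) := by
  refine not_gateauxDifferentiableAt_of_kink (u := u) hu ?_ ?_
  · filter_upwards [Ioo_mem_nhdsLT (show (-1 : ℝ) < 0 by norm_num)] with t ht
    have hs : 0 ≤ 1 + t := by linarith [ht.1]
    have hvsub : p (v - (1 + t) • u) ≤ p u :=
      calc p (v - (1 + t) • u) = p ((1 + t) • (v - u) + (-t) • v) := by congr 1; module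
        _ ≤ (1 + t) * p u + (-t) * p u := by
          refine (map_add_le_add p _ _).trans_eq ?_
          rw [p.apply_smul_of_nonneg hs, p.apply_smul_of_nonneg (by linarith [ht.2]),
            map_sub_rev, hsub, hv]
        _ = p u := by ring
    have := p.two_mul_le_add_add_sub v ((1 + t) • u)
    rw [hadd, show u + v + t • u = v + (1 + t) • u by module]
    linarith
  · filter_upwards [self_mem_nhdsWithin] with t (ht : 0 < t)
    have hs : 0 ≤ 1 + t := by linarith
    have hsub' : p ((1 + t) • u - v) ≤ (1 + t) * p u :=
      calc p ((1 + t) • u - v) = p (t • u + (u - v)) := by congr 1; module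
        _ ≤ t * p u + p u := by
          refine (map_add_le_add p _ _).trans_eq ?_
          rw [p.apply_smul_of_nonneg ht.le, hsub]
        _ = (1 + t) * p u := by ring
    have := p.two_mul_le_add_add_sub ((1 + t) • u) v
    rw [p.apply_smul_of_nonneg hs] at this
    rw [hadd, show u + v + t • u = (1 + t) • u + v by module]
    nlinarith

end Seminorm

theorem AntitoneOn.exists_isMinOn_countable {α : Type*} {V : Set α → ℝ}
    (hV : AntitoneOn V {F | F.Countable}) (hbdd : BddBelow (V '' {F | F.Countable})) :
    ∃ F₀ : Set α, F₀.Countable ∧ IsMinOn V {F | F.Countable} F₀ := by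
  obtain ⟨u, -, hu, hmem⟩ := exists_seq_tendsto_sInf ⟨_, mem_image_of_mem V countable_empty⟩ hbdd
  choose F hF hVF using hmem
  have hF₀ : (⋃ n, F n).Countable := countable_iUnion hF
  refine ⟨⋃ n, F n, hF₀, fun G hG => ?_⟩
  have : V (⋃ n, F n) ≤ sInf (V '' {F | F.Countable}) :=
    ge_of_tendsto' hu fun n => hVF n ▸ hV (hF n) hF₀ (subset_iUnion F n)
  exact this.trans (csInf_le hbdd (mem_image_of_mem V hG))

namespace linftyCF

variable {S : Type*}

instance : CoeFun (linftyCF S) (fun _ => S → ℝ) :=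
  ⟨fun x => ((x : lp (fun _ : S => ℝ) ∞) : S → ℝ)⟩

@[simp] lemma coe_add (x y : linftyCF S) : ⇑(x + y) = ⇑x + ⇑y := rfl

@[simp] lemma coe_neg (x : linftyCF S) : ⇑(-x) = -⇑x := rfl

@[simp] lemma coe_sub (x y : linftyCF S) : ⇑(x - y) = ⇑x - ⇑y := rfl

lemma support_countable (x : linftyCF S) : (support x).Countable := x.2.1

def IsPattern (x : linftyCF S) : Prop := ∀ s, x s ∈ ({-1, 0, 1} : Set ℝ)

lemma IsPattern.neg {x : linftyCF S} (hx : IsPattern x) : IsPattern (-x) := fun s => by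
  rcases hx s with h | h | h <;> simp_all

lemma IsPattern.of_eqOn_of_eqOn_compl {x y z : linftyCF S} {D : Set S} (hy : IsPattern y)
    (hz : IsPattern z) (hxy : EqOn x y D) (hxz : EqOn x z Dᶜ) : IsPattern x := fun s => by
  by_cases hs : s ∈ D
  · rw [hxy hs]; exact hy s
  · rw [hxz hs]; exact hz s

lemma IsPattern.norm_le_one {x : linftyCF S} (hx : IsPattern x) : ‖x‖ ≤ 1 :=
  lp.norm_le_of_forall_le zero_le_one fun s => by
    rcases hx s with h | h | h <;> simp_all

def mkPattern (f : S → ℝ) (hf : ∀ s, f s ∈ ({-1, 0, 1} : Set ℝ)) (hc : (support f).Countable) :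
    linftyCF S :=
  ⟨⟨f, memℓp_infty ⟨1, by rintro _ ⟨s, rfl⟩; rcases hf s with h | h | h <;> simp_all⟩⟩,
    hc, (toFinite _).subset (range_subset_iff.2 hf)⟩

lemma exists_isPattern_eqOn_of_seq {z : ℕ → linftyCF S} {D : ℕ → Set S}
    (hz : ∀ n, IsPattern (z n)) (hD : Monotone D) (hDc : ∀ n, (D n).Countable)
    (hzD : ∀ n, EqOn (z (n + 1)) (z n) (D n)) :
    ∃ x, IsPattern x ∧ ∀ n, EqOn x (z n) (D n) := by
  classical
  have hstab : ∀ n m, n ≤ m → EqOn (z m) (z n) (D n) := fun n m hnm => by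
    induction m, hnm using Nat.le_induction with
    | base => exact eqOn_refl _ _
    | succ m hnm ih => exact (hzD m |>.mono (hD hnm)).trans ih
  let f : S → ℝ := fun s => if h : ∃ n, s ∈ D n then z (Nat.find h) s else 0
  have hf : ∀ n, EqOn f (z n) (D n) := fun n s hs => by
    have h : ∃ n, s ∈ D n := ⟨n, hs⟩
    simp only [f, dif_pos h]
    exact (hstab _ _ (Nat.find_min' h hs) (Nat.find_spec h)).symm
  have hf_zero : EqOn f 0 (⋃ n, D n)ᶜ := fun s hs =>
    dif_neg (by simpa using hs)
  have hf_pat : ∀ s, f s ∈ ({-1, 0, 1} : Set ℝ) := fun s => by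
    by_cases hs : s ∈ ⋃ n, D n
    · obtain ⟨n, hn⟩ := mem_iUnion.1 hs
      rw [hf n hn]; exact hz n s
    · rw [hf_zero hs]; simp
  have hf_supp : (support f).Countable :=
    (countable_iUnion hDc).mono fun s hs => by_contra fun h => hs (hf_zero h)
  exact ⟨mkPattern f hf_pat hf_supp, hf_pat, hf⟩

def cylinder (z : linftyCF S) (D : Set S) : Set (linftyCF S) := {y | IsPattern y ∧ EqOn y z D}

lemma mem_cylinder_self {z : linftyCF S} (hz : IsPattern z) (D : Set S) : z ∈ cylinder z D :=
  ⟨hz, eqOn_refl _ _⟩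

lemma cylinder_subset_cylinder {z z' : linftyCF S} {D D' : Set S} (hD : D ⊆ D')
    (hz : EqOn z' z D) : cylinder z' D' ⊆ cylinder z D :=
  fun _ ⟨hy, hyz⟩ => ⟨hy, (hyz.mono hD).trans hz⟩

lemma add_mem_cylinder {x w : linftyCF S} {D : Set S} (hx : IsPattern x) (hxD : support x ⊆ D)
    (hw : IsPattern w) (hwD : EqOn w 0 D) : x + w ∈ cylinder x D := by
  have hxw : EqOn (x + w) x D := fun s hs => by simp [hwD hs]
  refine ⟨hx.of_eqOn_of_eqOn_compl hw hxw fun s hs => ?_, hxw⟩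
  simp [notMem_support.1 fun h => hs (hxD h)]

lemma sub_sub_mem_cylinder {x z : linftyCF S} {D : Set S} (hz : IsPattern z)
    (hzD : support z ⊆ D) (hx : x ∈ cylinder z D) : z - (x - z) ∈ cylinder z D := by
  have hr : EqOn (z - (x - z)) z D := fun s hs => by simp [hx.2 hs]
  refine ⟨hz.of_eqOn_of_eqOn_compl hx.1.neg hr fun s hs => ?_, hr⟩
  simp [notMem_support.1 fun h => hs (hzD h)]

variable {p : Seminorm ℝ (linftyCF S)}

variable (p) in
noncomputable def cylinderSup (z : linftyCF S) (D : Set S) : ℝ := sSup (p '' cylinder z D)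

lemma le_cylinderSup (hp : BddAbove (p '' {x | IsPattern x})) {y z : linftyCF S} {D : Set S}
    (hy : y ∈ cylinder z D) : p y ≤ cylinderSup p z D :=
  le_csSup (hp.mono (image_mono fun _ h => h.1)) (mem_image_of_mem _ hy)

lemma cylinderSup_le_cylinderSup (hp : BddAbove (p '' {x | IsPattern x})) {z z' : linftyCF S}
    {D D' : Set S} (hz' : IsPattern z') (hD : D ⊆ D') (hz : EqOn z' z D) :
    cylinderSup p z' D' ≤ cylinderSup p z D :=
  csSup_le ⟨_, mem_image_of_mem p (mem_cylinder_self hz' D')⟩ <| by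
    rintro _ ⟨y, hy, rfl⟩
    exact le_cylinderSup hp (cylinder_subset_cylinder hD hz hy)

lemma exists_mem_cylinder_lt_apply {z : linftyCF S} (hz : IsPattern z) (D : Set S) {ε : ℝ}
    (hε : 0 < ε) :
    ∃ y ∈ cylinder z D, cylinderSup p z D - ε < p y := by
  obtain ⟨_, ⟨y, hy, rfl⟩, hlt⟩ :=
    exists_lt_of_lt_csSup (⟨_, mem_image_of_mem p (mem_cylinder_self hz D)⟩)
      (sub_lt_self (cylinderSup p z D) hε)
  exact ⟨y, hy, hlt⟩

structure IsPeak (p : Seminorm ℝ (linftyCF S)) (x : linftyCF S) (D : Set S) : Prop where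
  isPattern : IsPattern x
  support_subset : support x ⊆ D
  apply_le : ∀ y ∈ cylinder x D, p y ≤ p x

variable (p) in
lemma exists_greedy_seq (F : Set S) {z₀ : linftyCF S} (hz₀ : IsPattern z₀) :
    ∃ z : ℕ → linftyCF S, z 0 = z₀ ∧ ∀ n : ℕ, z (n + 1) ∈ cylinder (z n) (F ∪ support (z n)) ∧
      cylinderSup p (z n) (F ∪ support (z n)) - 1 / (n + 1) < p (z (n + 1)) := by
  have step (n : ℕ) (z : {z : linftyCF S // IsPattern z}) : ∃ y : {y : linftyCF S // IsPattern y},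
      EqOn ⇑y.1 ⇑z.1 (F ∪ support ⇑z.1) ∧
        cylinderSup p z (F ∪ support ⇑z.1) - 1 / (n + 1) < p y := by
    obtain ⟨y, hy, hlt⟩ :=
      exists_mem_cylinder_lt_apply z.2 (F ∪ support ⇑z.1) Nat.one_div_pos_of_nat
    exact ⟨⟨y, hy.1⟩, hy.2, hlt⟩
  choose next hnext using step
  let z : ℕ → {z : linftyCF S // IsPattern z} := fun n => Nat.rec ⟨z₀, hz₀⟩ next n
  have hz (n : ℕ) : z (n + 1) = next n (z n) := rfl
  refine ⟨fun n => (z n).1, rfl, fun n => ?_⟩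
  dsimp only
  rw [hz]
  exact ⟨⟨(next n (z n)).2, (hnext n (z n)).1⟩, (hnext n (z n)).2⟩

theorem exists_isPeak_eqOn (hp : BddAbove (p '' {x | IsPattern x})) {F : Set S}
    (hF : F.Countable) {z₀ : linftyCF S} (hz₀ : IsPattern z₀) :
    ∃ x, IsPeak p x (F ∪ support x) ∧ EqOn x z₀ (F ∪ support z₀) := by
  obtain ⟨z, rfl, hz⟩ := exists_greedy_seq p F hz₀
  set D : ℕ → Set S := fun n => F ∪ support (z n)
  set σ : ℕ → ℝ := fun n => cylinderSup p (z n) (D n)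
  set ε : ℕ → ℝ := fun n => 1 / (n + 1)
  have hpat (n : ℕ) : IsPattern (z n) := by
    cases n with
    | zero => exact hz₀
    | succ n => exact (hz n).1.1
  have hD : Monotone D := monotone_nat_of_le_succ fun n => union_subset_union_right F
    fun s hs => by rwa [mem_support, (hz n).1.2 (mem_union_right F hs)]
  obtain ⟨x, hx, hxz⟩ := exists_isPattern_eqOn_of_seq hpat hD
    (fun n => hF.union (support_countable _)) fun n => (hz n).1.2
  have hDx (n : ℕ) : D n ⊆ F ∪ support x := union_subset_union_right F
    fun s hs => by rwa [mem_support, hxz n (mem_union_right F hs)]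
  -- convexity at `z (n + 1)`, whose reflection of `x` stays in its cylinder
  have hx_ge (n : ℕ) : σ n - 2 * ε n ≤ p x := by
    have hrefl : p (z (n + 1) - (x - z (n + 1))) ≤ σ (n + 1) :=
      le_cylinderSup hp (sub_sub_mem_cylinder (hpat _) subset_union_right ⟨hx, hxz (n + 1)⟩)
    have hσ : σ (n + 1) ≤ σ n := cylinderSup_le_cylinderSup hp (hpat _) (hD n.le_succ) (hz n).1.2
    have := p.two_mul_le_add_add_sub (z (n + 1)) (x - z (n + 1))
    rw [add_sub_cancel] at this
    linarith [(hz n).2]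
  refine ⟨x, ⟨hx, subset_union_right, fun y ⟨hy, hyx⟩ => ?_⟩, hxz 0⟩
  have hy_le (n : ℕ) : p y ≤ p x + 2 * ε n := by
    linarith [hx_ge n, le_cylinderSup hp ⟨hy, (hyx.mono (hDx n)).trans (hxz n)⟩]
  have hlim := (tendsto_const_nhds (x := p x)).add
    ((tendsto_one_div_add_atTop_nhds_zero_nat (𝕜 := ℝ)).const_mul 2)
  rw [mul_zero, add_zero] at hlim
  exact ge_of_tendsto' hlim hy_le

lemma IsPeak.apply_add_eq {x w : linftyCF S} {D : Set S} (hx : IsPeak p x D) (hw : IsPattern w)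
    (hwD : EqOn w 0 D) : p (x + w) = p x := by
  refine p.eq_of_add_le_of_sub_le (hx.apply_le _ ?_) (hx.apply_le _ ?_)
  · exact add_mem_cylinder hx.isPattern hx.support_subset hw hwD
  · rw [sub_eq_add_neg]
    exact add_mem_cylinder hx.isPattern hx.support_subset hw.neg fun s hs => by simp [hwD hs]

lemma IsPeak.apply_sub_eq {x w : linftyCF S} {D : Set S} (hx : IsPeak p x D) (hw : IsPattern w)
    (hwD : EqOn w 0 D) : p (x - w) = p x := by
  rw [sub_eq_add_neg]
  exact hx.apply_add_eq hw.neg fun s hs => by simp [hwD hs]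

lemma IsPeak.apply_le_of_eqOn_zero {x w : linftyCF S} {D : Set S} (hx : IsPeak p x D)
    (hw : IsPattern w) (hwD : EqOn w 0 D) : p w ≤ p x := by
  have := p.two_mul_le_add_add_sub w x
  rw [add_comm w x, map_sub_rev, hx.apply_add_eq hw hwD, hx.apply_sub_eq hw hwD] at this
  linarith

lemma exists_isPeak_ne_zero [Uncountable S] (hp : BddAbove (p '' {x | IsPattern x})) {F : Set S}
    (hF : F.Countable) : ∃ x : linftyCF S, x ≠ 0 ∧ EqOn x 0 F ∧ IsPeak p x (F ∪ support x) := by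
  classical
  obtain ⟨γ, hγ⟩ : ∃ γ, γ ∉ F :=
    (ne_univ_iff_exists_notMem F).1 fun h => not_countable_univ (h ▸ hF)
  have hpat : ∀ s, ({γ} : Set S).indicator (1 : S → ℝ) s ∈ ({-1, 0, 1} : Set ℝ) := fun s => by
    by_cases hs : s = γ <;> simp [hs]
  obtain ⟨e, he⟩ : ∃ e : linftyCF S, ⇑e = ({γ} : Set S).indicator 1 :=
    ⟨mkPattern _ hpat ((countable_singleton γ).mono support_indicator_subset), rfl⟩
  obtain ⟨x, hx, hxe⟩ := exists_isPeak_eqOn (z₀ := e) hp hF (by rw [IsPattern, he]; exact hpat)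
  have hxγ : x γ = 1 := by
    rw [hxe (mem_union_right F (by simp [he]))]
    simp [he]
  refine ⟨x, fun h => by simp [h] at hxγ, fun s hs => ?_, hx⟩
  rw [hxe (mem_union_left _ hs), he, indicator_of_notMem (by rintro rfl; exact hγ hs)]
  rfl

variable (p) in
noncomputable def peakSup (F : Set S) : ℝ :=
  sSup (p '' {x | EqOn x 0 F ∧ ∃ D : Set S, D.Countable ∧ IsPeak p x D})

lemma apply_le_peakSup (hp : BddAbove (p '' {x | IsPattern x})) {x : linftyCF S} {D F : Set S}
    (hxF : EqOn x 0 F) (hD : D.Countable) (hx : IsPeak p x D) : p x ≤ peakSup p F :=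
  le_csSup (hp.mono (image_mono fun _ ⟨_, _, _, hy⟩ => hy.isPattern))
    (mem_image_of_mem p ⟨hxF, D, hD, hx⟩)

lemma peakSup_le_of_isPeak [Uncountable S] (hp : BddAbove (p '' {x | IsPattern x}))
    {x : linftyCF S} {D F : Set S} (hF : F.Countable) (hD : D.Countable) (hx : IsPeak p x D) :
    peakSup p (F ∪ D) ≤ p x := by
  have hFD := hF.union hD
  obtain ⟨y, -, hyF, hy⟩ := exists_isPeak_ne_zero hp hFD
  refine csSup_le ⟨p y, mem_image_of_mem p ⟨hyF, _, hFD.union (support_countable y), hy⟩⟩ ?_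
  rintro _ ⟨w, ⟨hwF, _, _, hw⟩, rfl⟩
  exact hx.apply_le_of_eqOn_zero hw.isPattern (hwF.mono subset_union_right)

lemma antitoneOn_peakSup [Uncountable S] (hp : BddAbove (p '' {x | IsPattern x})) :
    AntitoneOn (peakSup p) {F : Set S | F.Countable} := by
  intro F _ G hG hFG
  obtain ⟨y, -, hyG, hy⟩ := exists_isPeak_ne_zero hp hG
  refine csSup_le_csSup (hp.mono (image_mono fun _ ⟨_, _, _, hw⟩ => hw.isPattern))
    ⟨p y, mem_image_of_mem p ⟨hyG, _, hG.union (support_countable y), hy⟩⟩ (image_mono ?_)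
  exact fun w ⟨hwG, hw⟩ => ⟨hwG.mono hFG, hw⟩

theorem exists_isPeak_apply_eq [Uncountable S] (hp : BddAbove (p '' {x | IsPattern x})) :
    ∃ x y : linftyCF S, ∃ D : Set S, x ≠ 0 ∧ IsPeak p x D ∧ IsPattern y ∧ EqOn y 0 D ∧
      p y = p x := by
  obtain ⟨F₀, hF₀, hmin⟩ := (antitoneOn_peakSup hp).exists_isMinOn_countable
    ⟨0, forall_mem_image.2 fun _ _ => Real.sSup_nonneg <| forall_mem_image.2 fun x _ =>
      apply_nonneg p x⟩
  have hval {x : linftyCF S} {D : Set S} (hxF : EqOn x 0 F₀) (hD : D.Countable)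
      (hx : IsPeak p x D) : p x = peakSup p F₀ :=
    le_antisymm (apply_le_peakSup hp hxF hD hx)
      ((hmin (hF₀.union hD)).trans (peakSup_le_of_isPeak hp hF₀ hD hx))
  obtain ⟨x, hx0, hxF, hx⟩ := exists_isPeak_ne_zero hp hF₀
  have hD : (F₀ ∪ support x).Countable := hF₀.union (support_countable x)
  obtain ⟨y, -, hyF, hy⟩ := exists_isPeak_ne_zero hp (hF₀.union hD)
  refine ⟨x, y, _, hx0, hx, hy.isPattern, hyF.mono subset_union_right, ?_⟩
  rw [hval hxF hD hx,
    hval (hyF.mono subset_union_left) ((hF₀.union hD).union (support_countable y)) hy]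

end linftyCF

/-- For an uncountable set `S`, the space `ℓ∞^{c,F}(S)` admits no
Gâteaux differentiable renorming: every equivalent norm fails to be Gâteaux differentiable
at some nonzero point. -/
theorem linftyCF_no_gateaux_renorming
    (S : Type*) [Uncountable S]
    (N : linftyCF S → ℝ) (hnorm : IsNorm N) (heq : IsEquivToAmbientNorm N) :
    ∃ x : linftyCF S, x ≠ 0 ∧ ¬ GateauxDifferentiableAt N x := by
  obtain ⟨hadd, hsmul, hdef⟩ := hnorm
  obtain ⟨a, b, ha, hab, hN⟩ := heq
  let p : Seminorm ℝ (linftyCF S) := Seminorm.of N hadd fun c x => by rw [hsmul, Real.norm_eq_abs]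
  have hp : BddAbove (p '' {x | linftyCF.IsPattern x}) := ⟨b, forall_mem_image.2 fun x hx =>
    (hN x).2.trans (by nlinarith [hx.norm_le_one, norm_nonneg x])⟩
  obtain ⟨x, y, D, hx0, hx, hy, hyD, hyx⟩ := linftyCF.exists_isPeak_apply_eq hp
  have hpos : 0 < p x := (apply_nonneg p x).lt_of_ne' fun h => hx0 (hdef x h)
  have hadd' : p (x + y) = p x := hx.apply_add_eq hy hyD
  refine ⟨x + y, fun h => hpos.ne' (by rw [← hadd', h]; exact p.map_zero'), ?_⟩
  exact p.not_gateauxDifferentiableAt_add hpos hyx hadd' (hx.apply_sub_eq hy hyD)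
end

section
/- Let S be a set. For every continuous linear functional φ on ℓ∞^c(S), there exists a countable set A ⊆ S such that φ(x) = 0 for every x ∈ ℓ∞^c(S) whose support is disjoint from A. -/
open scoped ENNReal

set_option maxHeartbeats 2000000 in
/-- Every continuous linear functional `φ` on `ℓ∞^c(S)` is countably
supported: there is a countable `A ⊆ S` such that `φ x = 0` whenever the support of `x`
is disjoint from `A`. -/
theorem continuous_functional_on_linftyC_countably_supported
    (S : Type*) (φ : linftyC S →L[ℝ] ℝ) :
    ∃ A : Set S, A.Countable ∧
      ∀ x : linftyC S,
        Disjoint (Function.support (⇑(x : lp (fun _ : S => ℝ) ∞) : S → ℝ)) A → φ x = 0 := by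
  classical
  by_contra hcon
  push_neg at hcon
  -- supremum of |φ x| over unit vectors supported away from A
  set T : Set S → Set (linftyC S) := fun A =>
    {x : linftyC S | ‖x‖ ≤ 1 ∧
      Disjoint (Function.support (⇑(x : lp (fun _ : S => ℝ) ∞) : S → ℝ)) A} with hT
  set M : Set S → ℝ := fun A => sSup ((fun x : linftyC S => |φ x|) '' T A) with hM
  have hT0 : ∀ A, (0 : linftyC S) ∈ T A := by
    intro A
    refine ⟨by simp, ?_⟩
    have h0 : (⇑((0 : linftyC S) : lp (fun _ : S => ℝ) ∞) : S → ℝ) = 0 := by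
      rw [ZeroMemClass.coe_zero, lp.coeFn_zero]
    rw [h0]
    simp
  have hbdd : ∀ A, BddAbove ((fun x : linftyC S => |φ x|) '' T A) := by
    intro A
    refine ⟨‖φ‖, ?_⟩
    rintro r ⟨x, ⟨hx1, _⟩, rfl⟩
    calc |φ x| ≤ ‖φ‖ * ‖x‖ := φ.le_opNorm x
      _ ≤ ‖φ‖ * 1 := by
          have := norm_nonneg φ
          nlinarith
      _ = ‖φ‖ := mul_one _
  have hpick : ∀ (A : Set S) (n : ℕ), ∃ x : linftyC S,
      x ∈ T A ∧ M A - 1 / (n + 1) < |φ x| := by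
    intro A n
    have hlt : M A - 1 / ((n : ℝ) + 1) < M A := by
      have : (0 : ℝ) < 1 / ((n : ℝ) + 1) := by positivity
      linarith
    have hne : ((fun x : linftyC S => |φ x|) '' T A).Nonempty := ⟨_, 0, hT0 A, rfl⟩
    obtain ⟨r, hr, hr2⟩ := exists_lt_of_lt_csSup hne hlt
    obtain ⟨x, hx, rfl⟩ := hr
    exact ⟨x, hx, hr2⟩
  choose pick hpickT hpickM using hpick
  -- the recursive accumulation of supports
  set H : ℕ → Set S := fun n => Nat.rec (∅ : Set S)
    (fun m Hm => Hm ∪ Function.support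
      (⇑((pick Hm m : linftyC S) : lp (fun _ : S => ℝ) ∞) : S → ℝ)) n with hH
  set X : ℕ → linftyC S := fun n => pick (H n) n with hX
  have hHsucc : ∀ n, H (n + 1) = H n ∪ Function.support
      (⇑((X n : linftyC S) : lp (fun _ : S => ℝ) ∞) : S → ℝ) := fun n => rfl
  have hHmono : ∀ {m n : ℕ}, m ≤ n → H m ⊆ H n := by
    intro m n h
    induction h with
    | refl => exact subset_rfl
    | step h ih =>
        refine ih.trans ?_
        rw [hHsucc]
        exact Set.subset_union_left
  have hHcount : ∀ n, (H n).Countable := by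
    intro n
    induction n with
    | zero => exact Set.countable_empty
    | succ m ih =>
        rw [hHsucc]
        exact ih.union (X m).2
  have hXdisjH : ∀ n, Disjoint
      (Function.support (⇑((X n : linftyC S) : lp (fun _ : S => ℝ) ∞) : S → ℝ)) (H n) :=
    fun n => (hpickT (H n) n).2
  have hXnorm : ∀ n, ‖X n‖ ≤ 1 := fun n => (hpickT (H n) n).1
  have hsuppX : ∀ n, Function.support
      (⇑((X n : linftyC S) : lp (fun _ : S => ℝ) ∞) : S → ℝ) ⊆ H (n + 1) := by
    intro n
    rw [hHsucc]
    exact Set.subset_union_right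
  have hdisj : ∀ m n, m < n → Disjoint
      (Function.support (⇑((X m : linftyC S) : lp (fun _ : S => ℝ) ∞) : S → ℝ))
      (Function.support (⇑((X n : linftyC S) : lp (fun _ : S => ℝ) ∞) : S → ℝ)) := by
    intro m n h
    exact ((hXdisjH n).symm.mono_left ((hsuppX m).trans (hHmono h)))
  -- the final countable set and the contradiction witness
  obtain ⟨y0, hy0d, hy0⟩ := hcon (⋃ n, H n) (Set.countable_iUnion hHcount)
  have hy0ne : y0 ≠ 0 := by
    intro h
    exact hy0 (by rw [h]; simp)
  have hy0n : ‖y0‖ ≠ 0 := fun h => hy0ne (norm_eq_zero.mp h)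
  set y : linftyC S := ‖y0‖⁻¹ • y0 with hy
  have hyn : ‖y‖ ≤ 1 := by
    rw [hy, norm_smul, norm_inv, norm_norm, inv_mul_cancel₀ hy0n]
  have hysupp : Function.support (⇑((y : linftyC S) : lp (fun _ : S => ℝ) ∞) : S → ℝ) ⊆
      Function.support (⇑((y0 : linftyC S) : lp (fun _ : S => ℝ) ∞) : S → ℝ) := by
    intro s hs h0
    apply hs
    have hc : ((y : linftyC S) : lp (fun _ : S => ℝ) ∞) =
        ‖y0‖⁻¹ • ((y0 : linftyC S) : lp (fun _ : S => ℝ) ∞) := rfl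
    rw [hc, lp.coeFn_smul, Pi.smul_apply, h0, smul_zero]
  have hyT : ∀ n, y ∈ T (H n) := by
    intro n
    refine ⟨hyn, ?_⟩
    exact (hy0d.mono_left hysupp).mono_right (Set.subset_iUnion H n)
  have hφy : φ y ≠ 0 := by
    rw [hy, map_smul, smul_eq_mul]
    exact mul_ne_zero (inv_ne_zero hy0n) hy0
  set δ := |φ y| with hδdef
  have hδ : 0 < δ := abs_pos.2 hφy
  have hMδ : ∀ n, δ ≤ M (H n) := fun n => le_csSup (hbdd (H n)) ⟨y, hyT n, rfl⟩
  have hXlb : ∀ n : ℕ, δ - 1 / ((n : ℝ) + 1) < |φ (X n)| := by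
    intro n
    have := hpickM (H n) n
    have := hMδ n
    linarith
  obtain ⟨n₀, hn₀⟩ := exists_nat_one_div_lt (half_pos hδ)
  have hXlb2 : ∀ n, n₀ ≤ n → δ / 2 < |φ (X n)| := by
    intro n hn
    have h1 : 1 / ((n : ℝ) + 1) ≤ 1 / ((n₀ : ℝ) + 1) := by
      apply one_div_le_one_div_of_le
      · positivity
      · exact_mod_cast by omega
    have := hXlb n
    linarith
  obtain ⟨N, hN⟩ := exists_nat_gt (‖φ‖ / (δ / 2))
  have hNbig : ‖φ‖ < (N : ℝ) * (δ / 2) := by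
    rw [div_lt_iff₀ (half_pos hδ)] at hN
    linarith
  set F : Finset ℕ := Finset.Ico n₀ (n₀ + N) with hF
  have hFcard : F.card = N := by simp [hF]
  set sgn : ℕ → ℝ := fun n => if 0 ≤ φ (X n) then 1 else -1 with hsgn
  have hsgnmul : ∀ n, sgn n * φ (X n) = |φ (X n)| := by
    intro n
    simp only [hsgn]
    by_cases h : 0 ≤ φ (X n)
    · rw [if_pos h, one_mul, abs_of_nonneg h]
    · rw [if_neg h, abs_of_neg (not_le.1 h)]; ring
  have hsgnabs : ∀ n, |sgn n| = 1 := by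
    intro n
    simp only [hsgn]
    by_cases h : 0 ≤ φ (X n) <;> simp [h]
  set z : linftyC S := ∑ n ∈ F, sgn n • X n with hz
  have hφz : φ z = ∑ n ∈ F, |φ (X n)| := by
    rw [hz, map_sum]
    refine Finset.sum_congr rfl fun n _ => ?_
    rw [map_smul, smul_eq_mul, hsgnmul]
  have hφzbig : ‖φ‖ < φ z := by
    rw [hφz]
    calc ‖φ‖ < (N : ℝ) * (δ / 2) := hNbig
      _ = F.card • (δ / 2) := by rw [hFcard, nsmul_eq_mul]
      _ ≤ ∑ n ∈ F, |φ (X n)| := by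
          apply Finset.card_nsmul_le_sum
          intro n hn
          exact le_of_lt (hXlb2 n (Finset.mem_Ico.1 hn).1)
  -- norm bound on z
  have hzcoe : ((z : linftyC S) : lp (fun _ : S => ℝ) ∞) =
      ∑ n ∈ F, sgn n • ((X n : linftyC S) : lp (fun _ : S => ℝ) ∞) := by
    rw [hz]
    push_cast
    rfl
  have hznorm : ‖z‖ ≤ 1 := by
    have : ‖((z : linftyC S) : lp (fun _ : S => ℝ) ∞)‖ ≤ 1 := by
      apply lp.norm_le_of_forall_le zero_le_one
      intro s
      have happ : (⇑((z : linftyC S) : lp (fun _ : S => ℝ) ∞) : S → ℝ) s =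
          ∑ n ∈ F, sgn n * (⇑((X n : linftyC S) : lp (fun _ : S => ℝ) ∞) : S → ℝ) s := by
        rw [hzcoe, lp.coeFn_sum, Finset.sum_apply]
        refine Finset.sum_congr rfl fun n _ => ?_
        rw [lp.coeFn_smul]
        rfl
      rw [Real.norm_eq_abs, happ]
      by_cases hall : ∀ n ∈ F, (⇑((X n : linftyC S) : lp (fun _ : S => ℝ) ∞) : S → ℝ) s = 0
      · rw [Finset.sum_eq_zero fun n hn => by rw [hall n hn, mul_zero]]
        simp
      · push_neg at hall
        obtain ⟨n₁, hn₁F, hn₁⟩ := hall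
        have hzero : ∀ m ∈ F, m ≠ n₁ →
            sgn m * (⇑((X m : linftyC S) : lp (fun _ : S => ℝ) ∞) : S → ℝ) s = 0 := by
          intro m _ hm
          have h0 : (⇑((X m : linftyC S) : lp (fun _ : S => ℝ) ∞) : S → ℝ) s = 0 := by
            by_contra h0
            rcases hm.lt_or_gt with h | h
            · exact Set.disjoint_left.1 (hdisj m n₁ h) h0 hn₁
            · exact Set.disjoint_left.1 (hdisj n₁ m h) hn₁ h0
          rw [h0, mul_zero]
        rw [Finset.sum_eq_single_of_mem n₁ hn₁F hzero, abs_mul, hsgnabs, one_mul]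
        have := lp.norm_apply_le_norm (ENNReal.top_ne_zero)
          ((X n₁ : linftyC S) : lp (fun _ : S => ℝ) ∞) s
        rw [Real.norm_eq_abs] at this
        exact this.trans (hXnorm n₁)
    exact this
  have : φ z ≤ ‖φ‖ := by
    calc φ z ≤ |φ z| := le_abs_self _
      _ ≤ ‖φ‖ * ‖z‖ := φ.le_opNorm z
      _ ≤ ‖φ‖ * 1 := by
          have := norm_nonneg φ
          nlinarith
      _ = ‖φ‖ := mul_one _
  linarith
end

section
/- Let S be a set and let N be a norm on ℓ∞^c(S) equivalent to the supremum norm. Then for every w ∈ ℓ∞^c(S) there exists a countable set A ⊆ S containing the support of w such that N(w + u) ≥ N(w) for every u ∈ ℓ∞^c(S) whose support is disjoint from A. -/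
open scoped ENNReal

/-!
For `A ⊆ S` let `I A` be the infimum of `N (w + u)` over the `u` supported off `A`. `I` is
monotone, so its supremum over countable sets is attained at the union of countably many of
them; adding the support of `w` gives the set `A`. It remains to see `N w ≤ I A`. If `I A < r`,
maximality of `A` yields, off every countable set, some `u` with `N (w + u) < r`, hence a sequence
`u₀, u₁, …` of such perturbations with pairwise disjoint supports. Disjointness keeps the sup norm
of `∑_{k<m} u_k` bounded, so the averages `v_m` tend to `0` for `N`, while `N (w + v_m) ≤ r` by
convexity; hence `N w ≤ r`.
-/

open Filter Topology Finset Function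

theorem lp.norm_sum_le_of_pairwise_disjoint_support {ι α E : Type*} [NormedAddCommGroup E]
    {f : α → lp (fun _ : ι => E) ∞} {s : Finset α} {M : ℝ} (hM : 0 ≤ M)
    (hf : Pairwise (Disjoint on (fun k => support (f k : ι → E))))
    (hle : ∀ k ∈ s, ‖f k‖ ≤ M) : ‖∑ k ∈ s, f k‖ ≤ M := by
  refine lp.norm_le_of_forall_le hM fun i => ?_
  rw [lp.coeFn_sum, Finset.sum_apply]
  by_cases h : ∀ j ∈ s, f j i = 0
  · simpa [sum_eq_zero h] using hM
  push Not at h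
  obtain ⟨j, hj, hji⟩ := h
  rw [sum_eq_single_of_mem j hj fun k _ hkj => ?_]
  · exact (lp.norm_apply_le_norm ENNReal.top_ne_zero _ i).trans (hle j hj)
  · by_contra hki
    exact Set.disjoint_left.mp (hf hkj) hki hji

theorem Seminorm.le_of_map_add_le_of_map_sum_le {Y : Type*} [AddCommGroup Y] [Module ℝ Y]
    (p : Seminorm ℝ Y) {w : Y} {u : ℕ → Y} {r M : ℝ}
    (hr : ∀ k, p (w + u k) ≤ r) (hM : ∀ m, p (∑ k ∈ range m, u k) ≤ M) : p w ≤ r := by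
  have hbound : ∀ m : ℕ, 0 < m → p w ≤ r + M / m := by
    intro m hm
    have hm' : (0 : ℝ) < m := Nat.cast_pos.2 hm
    set v : Y := (m : ℝ)⁻¹ • ∑ k ∈ range m, u k
    have hwv : w + v = (m : ℝ)⁻¹ • ∑ k ∈ range m, (w + u k) := by
      rw [sum_add_distrib, sum_const, card_range, smul_add, ← Nat.cast_smul_eq_nsmul ℝ,
        inv_smul_smul₀ hm'.ne']
    have hwv_le : p (w + v) ≤ r := by
      rw [hwv, map_smul_eq_mul, norm_inv, Real.norm_natCast, inv_mul_le_iff₀ hm']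
      calc p (∑ k ∈ range m, (w + u k)) ≤ ∑ k ∈ range m, p (w + u k) :=
            le_sum_of_subadditive p (map_zero p).le (map_add_le_add p) _ _
        _ ≤ ∑ _k ∈ range m, r := sum_le_sum fun k _ => hr k
        _ = m * r := by rw [sum_const, card_range, nsmul_eq_mul]
    have hv_le : p v ≤ M / m := by
      rw [map_smul_eq_mul, norm_inv, Real.norm_natCast, inv_mul_eq_div]
      exact div_le_div_of_nonneg_right (hM m) hm'.le
    calc p w = p (w + v - v) := by rw [add_sub_cancel_right]
      _ ≤ p (w + v) + p v := map_sub_le_add p _ _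
      _ ≤ r + M / m := add_le_add hwv_le hv_le
  have hlim : Tendsto (fun m : ℕ => r + M / m) atTop (𝓝 r) := by
    simpa using (tendsto_const_div_atTop_nhds_zero_nat M).const_add r
  exact ge_of_tendsto hlim (eventually_atTop.2 ⟨1, hbound⟩)

theorem exists_seq_pairwise_disjoint_of_forall_countable {Y S : Type*} (s : Y → Set S)
    (hs : ∀ y, (s y).Countable) {q : Y → Prop}
    (h : ∀ B : Set S, B.Countable → ∃ y, Disjoint (s y) B ∧ q y) :
    ∃ u : ℕ → Y, Pairwise (Disjoint on (fun n => s (u n))) ∧ ∀ n, q (u n) := by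
  choose pick hdisj hq using h
  let next : {B : Set S // B.Countable} → {B : Set S // B.Countable} := fun B =>
    ⟨B.1 ∪ s (pick B.1 B.2), B.2.union (hs _)⟩
  let F : ℕ → {B : Set S // B.Countable} := fun n => next^[n] ⟨∅, Set.countable_empty⟩
  have hF_succ : ∀ n, (F (n + 1)).1 = (F n).1 ∪ s (pick (F n).1 (F n).2) := fun n => by
    simp only [F, iterate_succ_apply']
    rfl
  have hF_mono : Monotone fun n => (F n).1 :=
    monotone_nat_of_le_succ fun n => (hF_succ n).symm ▸ Set.subset_union_left
  refine ⟨fun n => pick (F n).1 (F n).2, (pairwise_disjoint_on _).2 fun j k hjk => ?_,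
    fun n => hq _ _⟩
  have hj : s (pick (F j).1 (F j).2) ⊆ (F k).1 :=
    (hF_succ j ▸ Set.subset_union_right).trans (hF_mono hjk)
  exact (hdisj _ _).symm.mono_left hj

theorem exists_countable_forall_le_of_monotone {S α : Type*} [ConditionallyCompleteLinearOrder α]
    [TopologicalSpace α] [OrderTopology α] [FirstCountableTopology α] {f : Set S → α}
    (hf : Monotone f) (hbdd : BddAbove (f '' {A | A.Countable})) {A₀ : Set S}
    (hA₀ : A₀.Countable) :
    ∃ A, A.Countable ∧ A₀ ⊆ A ∧ ∀ B : Set S, B.Countable → f B ≤ f A := by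
  obtain ⟨x, -, hlim, hx⟩ := exists_seq_tendsto_sSup
    (Set.image_nonempty.2 ⟨∅, Set.countable_empty⟩) hbdd
  choose C hC hfC using hx
  refine ⟨A₀ ∪ ⋃ n, C n, hA₀.union (Set.countable_iUnion hC), Set.subset_union_left,
    fun B hB => ?_⟩
  calc f B ≤ sSup (f '' {A | A.Countable}) := le_csSup hbdd ⟨B, hB, rfl⟩
    _ ≤ f (A₀ ∪ ⋃ n, C n) := le_of_tendsto' hlim fun n =>
      hfC n ▸ hf ((Set.subset_iUnion C n).trans Set.subset_union_right)

noncomputable def IsNorm.toSeminorm {Y : Type*} [AddCommGroup Y] [Module ℝ Y] {N : Y → ℝ}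
    (hN : IsNorm N) : Seminorm ℝ Y :=
  Seminorm.of N hN.1 fun a x => by rw [hN.2.1, Real.norm_eq_abs]

namespace linftyC

variable {S : Type*}

def support (u : linftyC S) : Set S := Function.support (⇑(u : lp (fun _ : S => ℝ) ∞))

theorem countable_support (u : linftyC S) : (support u).Countable := u.2

@[simp]
theorem support_zero : support (0 : linftyC S) = ∅ := by
  rw [support, ZeroMemClass.coe_zero, lp.coeFn_zero, Function.support_zero]

theorem le_of_pairwise_disjoint_support (p : Seminorm ℝ (linftyC S))
    (hp : IsEquivToAmbientNorm ⇑p) {w : linftyC S} {u : ℕ → linftyC S} {r : ℝ}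
    (hu : Pairwise (Disjoint on (fun n => support (u n)))) (hr : ∀ n, p (w + u n) ≤ r) :
    p w ≤ r := by
  obtain ⟨a, b, ha, hab, hp⟩ := hp
  have hu_le : ∀ n, ‖u n‖ ≤ (r + p w) / a := fun n => by
    rw [le_div_iff₀' ha]
    calc a * ‖u n‖ ≤ p (u n) := (hp _).1
      _ = p (w + u n - w) := by rw [add_sub_cancel_left]
      _ ≤ r + p w := (map_sub_le_add p _ _).trans (add_le_add_left (hr n) _)
  have hM : 0 ≤ (r + p w) / a := (norm_nonneg _).trans (hu_le 0)
  refine p.le_of_map_add_le_of_map_sum_le (M := b * ((r + p w) / a)) hr fun m =>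
    (hp _).2.trans ?_
  refine mul_le_mul_of_nonneg_left ?_ (ha.le.trans hab)
  rw [← Submodule.norm_coe, Submodule.coe_sum]
  exact lp.norm_sum_le_of_pairwise_disjoint_support hM hu fun k _ => hu_le k

noncomputable def infOutside (p : Seminorm ℝ (linftyC S)) (w : linftyC S) (A : Set S) : ℝ :=
  ⨅ u : {u : linftyC S // Disjoint (support u) A}, p (w + u)

variable (p : Seminorm ℝ (linftyC S)) (w : linftyC S)

instance (A : Set S) : Nonempty {u : linftyC S // Disjoint (support u) A} :=
  ⟨⟨0, by simp⟩⟩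

theorem infOutside_le {A : Set S} {u : linftyC S} (hu : Disjoint (support u) A) :
    infOutside p w A ≤ p (w + u) :=
  ciInf_le (f := fun u : {u : linftyC S // Disjoint (support u) A} => p (w + u))
    ⟨0, Set.forall_mem_range.2 fun _ => apply_nonneg p _⟩ ⟨u, hu⟩

theorem infOutside_le_self (A : Set S) : infOutside p w A ≤ p w := by
  simpa using infOutside_le p w (u := 0) (by simp)

theorem infOutside_mono : Monotone (infOutside p w) := fun _ _ hAB =>
  le_ciInf fun u => infOutside_le p w (u.2.mono_right hAB)

theorem exists_lt_of_infOutside_lt {A : Set S} {r : ℝ} (h : infOutside p w A < r) :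
    ∃ u : linftyC S, Disjoint (support u) A ∧ p (w + u) < r := by
  obtain ⟨u, hu⟩ := exists_lt_of_ciInf_lt h
  exact ⟨u, u.2, hu⟩

theorem le_infOutside_of_forall_le (hp : IsEquivToAmbientNorm ⇑p) {A : Set S}
    (hA : ∀ B : Set S, B.Countable → infOutside p w B ≤ infOutside p w A) :
    p w ≤ infOutside p w A := by
  refine le_of_forall_gt_imp_ge_of_dense fun r hr => ?_
  obtain ⟨u, hu_disj, hu_lt⟩ := exists_seq_pairwise_disjoint_of_forall_countable support
    countable_support fun B hB => exists_lt_of_infOutside_lt p w ((hA B hB).trans_lt hr)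
  exact le_of_pairwise_disjoint_support p hp hu_disj fun n => (hu_lt n).le

end linftyC

/-- Let `N` be an equivalent norm on `ℓ∞^c(S)`. For every
`w ∈ ℓ∞^c(S)` there is a countable set `A ⊆ S` containing the support of `w` such
that `N (w + u) ≥ N w` whenever the support of `u` is disjoint from `A`. -/
theorem equivalent_norm_on_linftyC_forbidden_set
    (S : Type*) (N : linftyC S → ℝ) (hnorm : IsNorm N) (heq : IsEquivToAmbientNorm N)
    (w : linftyC S) :
    ∃ A : Set S, A.Countable ∧
      Function.support (⇑(w : lp (fun _ : S => ℝ) ∞) : S → ℝ) ⊆ A ∧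
      ∀ u : linftyC S,
        Disjoint (Function.support (⇑(u : lp (fun _ : S => ℝ) ∞) : S → ℝ)) A →
          N w ≤ N (w + u) := by
  let p := hnorm.toSeminorm
  have hbdd : BddAbove (linftyC.infOutside p w '' {A | A.Countable}) :=
    ⟨p w, Set.forall_mem_image.2 fun A _ => linftyC.infOutside_le_self p w A⟩
  obtain ⟨A, hA, hwA, hA_max⟩ := exists_countable_forall_le_of_monotone
    (linftyC.infOutside_mono p w) hbdd (linftyC.countable_support w)
  exact ⟨A, hA, hwA, fun u hu =>
    (linftyC.le_infOutside_of_forall_le p w heq hA_max).trans (linftyC.infOutside_le p w hu)⟩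
end

section
/- Let Γ be an uncountable set, let N be a norm on ℓ∞^{c,F}(Γ) equivalent to the supremum norm, and let 𝒰 := { x ∈ ℓ∞^c(Γ) : x(γ) ∈ {0, 1, −1} for every γ ∈ Γ }. Then for every subset S ⊆ Γ with |S| = |Γ| there exist a vector V ∈ 𝒰 and a countable set F ⊆ S with the support of V contained in F, such that N(V + u) = N(V) for every u ∈ 𝒰 whose support is contained in S ∖ F. -/
open scoped ENNReal

set_option maxHeartbeats 1000000

namespace Claim19
open Function Set

variable {Γ : Type*}

noncomputable def fc (x : linftyCF Γ) : Γ → ℝ := ⇑((x : lp (fun _ : Γ => ℝ) ∞))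

lemma fc_add (x y : linftyCF Γ) : fc (x + y) = fc x + fc y := by
  unfold fc; rw [Submodule.coe_add, lp.coeFn_add]

lemma fc_neg (x : linftyCF Γ) : fc (-x) = - fc x := by
  unfold fc; rw [Submodule.coe_neg, lp.coeFn_neg]

lemma fc_sub (x y : linftyCF Γ) : fc (x - y) = fc x - fc y := by
  unfold fc; rw [Submodule.coe_sub, lp.coeFn_sub]

lemma fc_zero : fc (0 : linftyCF Γ) = 0 := by
  unfold fc; rw [Submodule.coe_zero, lp.coeFn_zero]

lemma fc_support_countable (x : linftyCF Γ) : (Function.support (fc x)).Countable := x.2.1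

lemma exists_fc_eq (g : Γ → ℝ) (hval : ∀ γ, g γ = 0 ∨ g γ = 1 ∨ g γ = -1)
    (hsupp : (support g).Countable) : ∃ x : linftyCF Γ, fc x = g := by
  have hb : ∀ γ, ‖g γ‖ ≤ 1 := by
    intro γ; rcases hval γ with h | h | h <;> simp [h]
  have hmem : Memℓp g ∞ := memℓp_infty ⟨1, by rintro r ⟨γ, rfl⟩; exact hb γ⟩
  refine ⟨⟨⟨g, hmem⟩, hsupp, ?_⟩, rfl⟩
  refine (((Set.finite_singleton (-1:ℝ)).insert 1).insert 0).subset ?_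
  rintro r ⟨γ, rfl⟩
  rcases hval γ with h | h | h <;> simp [h]

/-- the set 𝒰 -/
def UU (Γ : Type*) : Set (linftyCF Γ) :=
  {x : linftyCF Γ | ∀ γ : Γ, fc x γ ∈ ({0, 1, -1} : Set ℝ)}

lemma mem_UU_iff {x : linftyCF Γ} :
    x ∈ UU Γ ↔ ∀ γ, fc x γ = 0 ∨ fc x γ = 1 ∨ fc x γ = -1 := by
  simp [UU, Set.mem_insert_iff, Set.mem_singleton_iff]

lemma UU_zero : (0 : linftyCF Γ) ∈ UU Γ := by
  rw [mem_UU_iff]; intro γ; left; rw [fc_zero]; rfl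

lemma UU_neg {x : linftyCF Γ} (hx : x ∈ UU Γ) : -x ∈ UU Γ := by
  rw [mem_UU_iff] at hx ⊢
  intro γ
  rcases hx γ with h | h | h <;> rw [fc_neg] <;> simp [h]

lemma support_fc_neg (x : linftyCF Γ) : support (fc (-x)) = support (fc x) := by
  rw [fc_neg]; exact Function.support_neg (fc x)

lemma UU_add {x y : linftyCF Γ} (hx : x ∈ UU Γ) (hy : y ∈ UU Γ)
    (hd : ∀ γ, fc x γ = 0 ∨ fc y γ = 0) : x + y ∈ UU Γ := by
  rw [mem_UU_iff] at hx hy ⊢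
  intro γ
  rw [fc_add]
  rcases hd γ with h | h
  · simpa [Pi.add_apply, h] using hy γ
  · simpa [Pi.add_apply, h] using hx γ

lemma support_fc_add_eq {x y : linftyCF Γ} (hd : ∀ γ, fc x γ = 0 ∨ fc y γ = 0) :
    support (fc (x + y)) = support (fc x) ∪ support (fc y) := by
  ext γ
  simp only [mem_support, fc_add, Pi.add_apply, mem_union]
  rcases hd γ with h | h <;> simp [h]

lemma norm_le_one [Nonempty Γ] (x : linftyCF Γ) (hx : x ∈ UU Γ) : ‖x‖ ≤ 1 := by
  rw [mem_UU_iff] at hx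
  rw [← Submodule.norm_coe x]
  refine lp.norm_le_of_forall_le zero_le_one fun γ => ?_
  rcases hx γ with h | h | h <;>
    simp [show (x : lp (fun _ : Γ => ℝ) ∞) γ = fc x γ from rfl, h]

/-- admissible perturbations -/
def Adm (S : Set Γ) (V u : linftyCF Γ) : Prop :=
  u ∈ UU Γ ∧ support (fc u) ⊆ S \ support (fc V)

noncomputable def sV (N : linftyCF Γ → ℝ) (S : Set Γ) (V : linftyCF Γ) : ℝ :=
  sSup ((fun u => N (V + u)) '' {u | Adm S V u})

noncomputable def seqV (f : ℕ → linftyCF Γ → linftyCF Γ) : ℕ → linftyCF Γ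
  | 0 => 0
  | n + 1 => seqV f n + f n (seqV f n)

theorem main {Γ : Type*} [Nonempty Γ] (N : linftyCF Γ → ℝ)
    (Ntri : ∀ x y, N (x + y) ≤ N x + N y) (Nsm : ∀ (a : ℝ) (x : linftyCF Γ), N (a • x) = |a| * N x)
    (b : ℝ) (hNb : ∀ x, N x ≤ b * ‖x‖) (hb0 : 0 ≤ b) (S : Set Γ) :
    ∃ V ∈ UU Γ, ∃ F : Set Γ, F.Countable ∧ F ⊆ S ∧ support (fc V) ⊆ F ∧
      ∀ u ∈ UU Γ, support (fc u) ⊆ S \ F → N (V + u) = N V := by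
  classical
  have hNU : ∀ x ∈ UU Γ, N x ≤ b := fun x hx =>
    (hNb x).trans (mul_le_of_le_one_right hb0 (norm_le_one x hx))
  -- closure of Adm
  have admUU : ∀ V ∈ UU Γ, ∀ u, Adm S V u →
      (V + u) ∈ UU Γ ∧ support (fc (V + u)) = support (fc V) ∪ support (fc u) := by
    intro V hV u hu
    have hd : ∀ γ, fc V γ = 0 ∨ fc u γ = 0 := by
      intro γ
      by_cases h : fc V γ = 0
      · exact Or.inl h
      · refine Or.inr ?_
        by_contra h2
        exact (hu.2 h2).2 h
    exact ⟨UU_add hV hu.1 hd, support_fc_add_eq hd⟩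
  have hAdm0 : ∀ V : linftyCF Γ, Adm S V 0 := fun V => ⟨UU_zero, by rw [fc_zero]; simp⟩
  have hbdd : ∀ V ∈ UU Γ, BddAbove ((fun u => N (V + u)) '' {u | Adm S V u}) := by
    intro V hV
    refine ⟨b, ?_⟩
    rintro r ⟨u, hu, rfl⟩
    exact hNU _ ((admUU V hV u hu).1)
  have hne : ∀ V : linftyCF Γ, ((fun u => N (V + u)) '' {u | Adm S V u}).Nonempty :=
    fun V => ⟨N (V + 0), ⟨0, hAdm0 V, rfl⟩⟩
  have hleS : ∀ V ∈ UU Γ, ∀ u, Adm S V u → N (V + u) ≤ sV N S V :=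
    fun V hV u hu => le_csSup (hbdd V hV) ⟨u, hu, rfl⟩
  have hNleS : ∀ V ∈ UU Γ, N V ≤ sV N S V := by
    intro V hV
    have := hleS V hV 0 (hAdm0 V)
    simpa using this
  have hclose : ∀ (ε : ℝ), 0 < ε → ∀ V : linftyCF Γ,
      ∃ u, Adm S V u ∧ sV N S V - ε < N (V + u) := by
    intro ε hε V
    obtain ⟨r, ⟨u, hu, rfl⟩, hr⟩ := exists_lt_of_lt_csSup (hne V) (sub_lt_self _ hε)
    exact ⟨u, hu, hr⟩
  choose f hf1 hf2 using fun (n : ℕ) (V : linftyCF Γ) =>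
    hclose ((1/2 : ℝ) ^ n) (by positivity) V
  set V : ℕ → linftyCF Γ := seqV f with hVdef
  have hVsucc : ∀ n, V (n + 1) = V n + f n (V n) := fun n => rfl
  -- invariants
  have inv : ∀ n, V n ∈ UU Γ ∧ support (fc (V n)) ⊆ S := by
    intro n
    induction n with
    | zero =>
      refine ⟨UU_zero, ?_⟩
      rw [show V 0 = 0 from rfl, fc_zero]
      simp
    | succ n ih =>
      obtain ⟨h1, h2⟩ := ih
      obtain ⟨hU, hsup⟩ := admUU (V n) h1 _ (hf1 n (V n))
      rw [hVsucc n]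
      refine ⟨hU, ?_⟩
      rw [hsup]
      exact union_subset h2 fun γ hγ => ((hf1 n (V n)).2 hγ).1
  have hsuppsucc : ∀ n, support (fc (V (n + 1)))
      = support (fc (V n)) ∪ support (fc (f n (V n))) := by
    intro n
    rw [hVsucc n]
    exact (admUU (V n) (inv n).1 _ (hf1 n (V n))).2
  -- agreement along the sequence
  have agree : ∀ m k, Adm S (V m) (V (m + k) - V m) := by
    intro m k
    induction k with
    | zero =>
      rw [Nat.add_zero, sub_self]
      exact hAdm0 (V m)
    | succ k ih =>
      have hdk : support (fc (V (m + k) - V m)) ⊆ support (fc (V (m + k))) := by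
        intro γ hγ
        rw [mem_support] at hγ ⊢
        rw [fc_sub] at hγ
        by_contra h0
        have hVm : fc (V m) γ ≠ 0 := by
          intro h; apply hγ; simp [Pi.sub_apply, h0, h]
        exact (ih.2 (by rw [mem_support, fc_sub]; simpa [Pi.sub_apply] using hγ)).2 hVm
      have hdisj : ∀ γ, fc (V (m + k) - V m) γ = 0 ∨ fc (f (m + k) (V (m + k))) γ = 0 := by
        intro γ
        by_cases h : fc (V (m + k) - V m) γ = 0
        · exact Or.inl h
        · refine Or.inr ?_
          by_contra h2
          exact ((hf1 (m + k) (V (m + k))).2 h2).2 (hdk h)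
      have hmono : support (fc (V m)) ⊆ support (fc (V (m + k))) := by
        intro γ hγ
        rw [mem_support] at hγ ⊢
        have hd0 : fc (V (m + k) - V m) γ = 0 := by
          by_contra h
          exact (ih.2 h).2 hγ
        rw [fc_sub, Pi.sub_apply] at hd0
        intro h
        apply hγ
        linarith
      have heq : V (m + (k + 1)) - V m = (V (m + k) - V m) + f (m + k) (V (m + k)) := by
        rw [show m + (k + 1) = (m + k) + 1 from rfl, hVsucc (m + k)]
        abel
      rw [heq]
      refine ⟨UU_add ih.1 (hf1 _ _).1 hdisj, ?_⟩
      have hsub : support (fc ((V (m + k) - V m) + f (m + k) (V (m + k))))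
          ⊆ support (fc (V (m + k) - V m)) ∪ support (fc (f (m + k) (V (m + k)))) := by
        rw [fc_add]; exact Function.support_add _ _
      refine hsub.trans (union_subset ih.2 ?_)
      exact (hf1 (m + k) (V (m + k))).2.trans (diff_subset_diff_right hmono)
  have agree_le : ∀ m n, m ≤ n → Adm S (V m) (V n - V m) := by
    intro m n h
    obtain ⟨k, rfl⟩ := Nat.exists_eq_add_of_le h
    exact agree m k
  have hstab : ∀ (γ : Γ) m n, m ≤ n → fc (V m) γ ≠ 0 → fc (V n) γ = fc (V m) γ := by
    intro γ m n hmn h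
    have h0 : fc (V n - V m) γ = 0 := by
      by_contra hc
      exact ((agree_le m n hmn).2 hc).2 h
    rw [fc_sub, Pi.sub_apply] at h0
    linarith
  -- the limit vector
  obtain ⟨g, hgdef⟩ : ∃ g : Γ → ℝ, ∀ γ,
      g γ = if h : ∃ n, fc (V n) γ ≠ 0 then fc (V (Nat.find h)) γ else 0 :=
    ⟨_, fun γ => rfl⟩
  have hgV : ∀ n γ, fc (V n) γ ≠ 0 → g γ = fc (V n) γ := by
    intro n γ h
    have hex : ∃ k, fc (V k) γ ≠ 0 := ⟨n, h⟩
    rw [hgdef γ, dif_pos hex]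
    exact (hstab γ _ n (Nat.find_min' hex h) (Nat.find_spec hex)).symm
  have hg0 : ∀ γ, ¬(∃ n, fc (V n) γ ≠ 0) → g γ = 0 := by
    intro γ h
    rw [hgdef γ, dif_neg h]
  have hgval : ∀ γ, g γ = 0 ∨ g γ = 1 ∨ g γ = -1 := by
    intro γ
    by_cases h : ∃ n, fc (V n) γ ≠ 0
    · obtain ⟨n, hn⟩ := h
      rw [hgV n γ hn]
      exact mem_UU_iff.1 (inv n).1 γ
    · exact Or.inl (hg0 γ h)
  have hsuppg : support g = ⋃ n, support (fc (V n)) := by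
    ext γ
    simp only [mem_support, mem_iUnion]
    constructor
    · intro h
      by_cases hex : ∃ n, fc (V n) γ ≠ 0
      · exact hex
      · exact absurd (hg0 γ hex) h
    · rintro ⟨n, hn⟩
      rw [hgV n γ hn]
      exact hn
  have hgcount : (support g).Countable := by
    rw [hsuppg]
    exact countable_iUnion fun n => fc_support_countable (V n)
  have hgS : support g ⊆ S := by
    rw [hsuppg]
    exact iUnion_subset fun n => (inv n).2
  obtain ⟨W, hW⟩ := exists_fc_eq g hgval hgcount
  have hWU : W ∈ UU Γ := by
    rw [mem_UU_iff]
    intro γ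
    rw [hW]
    exact hgval γ
  have hsubF : ∀ n, support (fc (V n)) ⊆ support g := by
    intro n γ hγ
    rw [mem_support] at hγ ⊢
    rw [hgV n γ hγ]
    exact hγ
  have hwAdm : ∀ n, Adm S (V n) (W - V n) := by
    intro n
    have hfc : fc (W - V n) = g - fc (V n) := by rw [fc_sub, hW]
    have hz : ∀ γ, fc (V n) γ ≠ 0 → fc (W - V n) γ = 0 := by
      intro γ h
      rw [hfc, Pi.sub_apply, hgV n γ h, sub_self]
    constructor
    · rw [mem_UU_iff]
      intro γ
      by_cases h : fc (V n) γ = 0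
      · rw [hfc, Pi.sub_apply, h, sub_zero]
        exact hgval γ
      · exact Or.inl (hz γ h)
    · intro γ hγ
      rw [mem_support] at hγ
      have h0 : fc (V n) γ = 0 := by
        by_contra h
        exact hγ (hz γ h)
      refine ⟨?_, by simp [mem_support, h0]⟩
      apply hgS
      rw [mem_support]
      intro hgγ
      apply hγ
      rw [hfc, Pi.sub_apply, hgγ, h0, sub_zero]
    -- end hwAdm
  have hwsupp : ∀ n, support (fc (W - V n)) ⊆ support g := by
    intro n γ hγ
    rw [mem_support] at hγ
    have h0 : fc (V n) γ = 0 := by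
      by_contra h
      apply hγ
      rw [fc_sub, Pi.sub_apply, hW, hgV n γ h, sub_self]
    rw [mem_support]
    intro hgγ
    apply hγ
    rw [fc_sub, Pi.sub_apply, hW, hgγ, h0, sub_zero]
  have hbound : ∀ u, u ∈ UU Γ → support (fc u) ⊆ S \ support g → ∀ n,
      N (W + u) ≤ sV N S (V n) ∧ 2 * N W - sV N S (V n) ≤ N (W + u) := by
    intro u hu hus n
    have hw := hwAdm n
    have build : ∀ z, z ∈ UU Γ → support (fc z) ⊆ S \ support g →
        Adm S (V n) ((W - V n) + z) := by
      intro z hz hzs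
      have hdisj : ∀ γ, fc (W - V n) γ = 0 ∨ fc z γ = 0 := by
        intro γ
        by_cases h : fc (W - V n) γ = 0
        · exact Or.inl h
        · refine Or.inr ?_
          by_contra h2
          exact (hzs h2).2 (hwsupp n h)
      refine ⟨UU_add hw.1 hz hdisj, ?_⟩
      have hsub : support (fc ((W - V n) + z)) ⊆ support (fc (W - V n)) ∪ support (fc z) := by
        rw [fc_add]; exact Function.support_add _ _
      exact hsub.trans (union_subset hw.2 (hzs.trans (diff_subset_diff_right (hsubF n))))
    have hup : N (W + u) ≤ sV N S (V n) := by
      have heq : W + u = V n + ((W - V n) + u) := by abel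
      rw [heq]
      exact hleS (V n) (inv n).1 _ (build u hu hus)
    have hneg : N (W - u) ≤ sV N S (V n) := by
      have heq : W - u = V n + ((W - V n) + (-u)) := by abel
      rw [heq]
      exact hleS (V n) (inv n).1 _
        (build (-u) (UU_neg hu) (by rw [support_fc_neg]; exact hus))
    refine ⟨hup, ?_⟩
    have h5 : N (W + W) = 2 * N W := by
      rw [show W + W = (2 : ℝ) • W from (two_smul ℝ W).symm, Nsm]
      norm_num
    have h6 : W + W = (W + u) + (W - u) := by abel
    have h7 := Ntri (W + u) (W - u)
    rw [← h6, h5] at h7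
    linarith
  have hWlower : ∀ n, 2 * N (V n) - sV N S (V n) ≤ N W := by
    intro n
    have hw := hwAdm n
    have hnegw : Adm S (V n) (-(W - V n)) :=
      ⟨UU_neg hw.1, by rw [support_fc_neg]; exact hw.2⟩
    have h2 : N (V n + -(W - V n)) ≤ sV N S (V n) := hleS (V n) (inv n).1 _ hnegw
    have h5 : N (V n + V n) = 2 * N (V n) := by
      rw [show V n + V n = (2 : ℝ) • (V n) from (two_smul ℝ (V n)).symm, Nsm]
      norm_num
    have heq : V n + V n = W + (V n + -(W - V n)) := by abel
    have h7 := Ntri W (V n + -(W - V n))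
    rw [← heq, h5] at h7
    linarith
  -- gap control
  have hgapmono : ∀ n, sV N S (V (n + 1)) ≤ sV N S (V n) := by
    intro n
    refine csSup_le (hne (V (n + 1))) ?_
    rintro r ⟨u, hu, rfl⟩
    have hun := hf1 n (V n)
    have hdisj : ∀ γ, fc (f n (V n)) γ = 0 ∨ fc u γ = 0 := by
      intro γ
      by_cases h : fc (f n (V n)) γ = 0
      · exact Or.inl h
      · refine Or.inr ?_
        by_contra h2
        have h3 : γ ∈ support (fc (V (n + 1))) := by
          rw [hsuppsucc n]
          exact Or.inr h
        exact (hu.2 h2).2 h3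
    have hAdm' : Adm S (V n) (f n (V n) + u) := by
      refine ⟨UU_add hun.1 hu.1 hdisj, ?_⟩
      have hsub : support (fc (f n (V n) + u))
          ⊆ support (fc (f n (V n))) ∪ support (fc u) := by
        rw [fc_add]; exact Function.support_add _ _
      refine hsub.trans (union_subset hun.2 (hu.2.trans ?_))
      refine diff_subset_diff_right ?_
      rw [hsuppsucc n]
      exact subset_union_left
    have heq : V (n + 1) + u = V n + (f n (V n) + u) := by
      rw [hVsucc n]; abel
    show N (V (n + 1) + u) ≤ sV N S (V n)
    rw [heq]
    exact hleS (V n) (inv n).1 _ hAdm'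
  have hgapsmall : ∀ n, sV N S (V (n + 1)) - N (V (n + 1)) ≤ (1/2 : ℝ) ^ n := by
    intro n
    have h1 := hf2 n (V n)
    have h2 := hgapmono n
    have h3 : N (V (n + 1)) = N (V n + f n (V n)) := by rw [hVsucc n]
    linarith
  have hgap0 : ∀ n, 0 ≤ sV N S (V n) - N (V n) := fun n => by
    have := hNleS (V n) (inv n).1
    linarith
  have hWclose : ∀ n, sV N S (V n) - 2 * (sV N S (V n) - N (V n)) ≤ N W ∧ N W ≤ sV N S (V n) := by
    intro n
    have h1 := hbound 0 UU_zero (by rw [fc_zero]; simp) n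
    rw [add_zero] at h1
    have h2 := hWlower n
    exact ⟨by linarith, h1.1⟩
  -- conclusion
  refine ⟨W, hWU, support g, hgcount, hgS, by rw [hW], ?_⟩
  intro u hu hus
  have hbnd : ∀ n, |N (W + u) - N W| ≤ 2 * (sV N S (V n) - N (V n)) := by
    intro n
    have h1 := hbound u hu hus n
    have h2 := hWclose n
    rw [abs_le]
    constructor <;> [linarith; linarith]
  by_contra hne'
  have hd : 0 < |N (W + u) - N W| := abs_pos.2 (sub_ne_zero.2 hne')
  obtain ⟨n, hn⟩ := exists_pow_lt_of_lt_one
    (show (0:ℝ) < |N (W + u) - N W| / 4 by linarith) (by norm_num : (1:ℝ)/2 < 1)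
  have h1 := hbnd (n + 1)
  have h2 := hgapsmall n
  linarith

end Claim19

/-- Let `Γ` be uncountable, `N` an equivalent norm on `ℓ∞^{c,F}(Γ)`
and `𝒰` the set of `{0, 1, -1}`-valued elements. For every `S ⊆ Γ` with `|S| = |Γ|`
there are `V ∈ 𝒰` and a countable `F ⊆ S` containing the support of `V` such that
`N (V + u) = N V` for every `u ∈ 𝒰` supported in `S \ F`. -/
theorem claim_constant_norm_on_linftyCF
    (Γ : Type*) [Uncountable Γ]
    (N : linftyCF Γ → ℝ) (hnorm : IsNorm N) (heq : IsEquivToAmbientNorm N)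
    (𝒰 : Set (linftyCF Γ))
    (h𝒰 : 𝒰 = {x : linftyCF Γ | ∀ γ : Γ,
      (⇑(x : lp (fun _ : Γ => ℝ) ∞) : Γ → ℝ) γ ∈ ({0, 1, -1} : Set ℝ)})
    (S : Set Γ) (hS : Cardinal.mk S = Cardinal.mk Γ) :
    ∃ V ∈ 𝒰, ∃ F : Set Γ, F.Countable ∧ F ⊆ S ∧
      Function.support (⇑(V : lp (fun _ : Γ => ℝ) ∞) : Γ → ℝ) ⊆ F ∧
      ∀ u ∈ 𝒰,
        Function.support (⇑(u : lp (fun _ : Γ => ℝ) ∞) : Γ → ℝ) ⊆ S \ F →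
          N (V + u) = N V := by
  subst h𝒰
  haveI : Nonempty Γ := by
    by_contra h
    rw [not_nonempty_iff] at h
    exact not_countable (inferInstance : Countable Γ)
  obtain ⟨a, b, ha, hab, hN⟩ := heq
  obtain ⟨Ntri, Nsm, -⟩ := hnorm
  obtain ⟨V, hV, F, h1, h2, h3, h4⟩ :=
    Claim19.main N Ntri Nsm b (fun x => (hN x).2) (le_trans ha.le hab) S
  exact ⟨V, hV, F, h1, h2, h3, h4⟩
end
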